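/- arXiv:0903.4796 — 15 statements merged into one kernel-verified Lean document; each statement's English description precedes it below -/
import Mathlib

section
/- Let G be a finite simple graph and A a subset of V(G). Then the cut-rank of A is at most the union-count of A: ρ_G(A) ≤ U_G(A). Equivalently, log₂ ρ_G(A) ≤ β_G(A), i.e., the GF(2)-rank of the cut matrix of A is at most the number of distinct sets of the form N(Y)∖A with Y ⊆ A. -/
open Classical in
/-- The cut matrix of `A`: rows indexed by `A`, columns by its complement, over GF(2),
with `(x,y)` entry `1` iff `x` and `y` are adjacent. -/
noncomputable def cutMatrix {V : Type*} [Fintype V] [DecidableEq V]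
    (G : SimpleGraph V) (A : Finset V) : Matrix ↥A ↥(Aᶜ) (ZMod 2) :=
  Matrix.of fun x y => if G.Adj x.1 y.1 then 1 else 0

/-- The cut-rank `ρ_G(A)`: the GF(2)-rank of the cut matrix of `A`. -/
noncomputable def cutRank {V : Type*} [Fintype V] [DecidableEq V]
    (G : SimpleGraph V) (A : Finset V) : ℕ :=
  (cutMatrix G A).rank

/-- The union-count `U_G(A)`: the number of distinct sets `N(Y) \ A` over `Y ⊆ A`. -/
noncomputable def unionCount {V : Type*} [Fintype V] [DecidableEq V]
    (G : SimpleGraph V) (A : Finset V) : ℕ :=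
  Set.ncard {S : Set V | ∃ Y : Set V, Y ⊆ ↑A ∧ (⋃ y ∈ Y, G.neighborSet y) \ ↑A = S}

/-- `nss_G(A)`: the number of distinct GF(2)-linear spans of subsets of rows of the
cut matrix of `A`. -/
noncomputable def nss {V : Type*} [Fintype V] [DecidableEq V]
    (G : SimpleGraph V) (A : Finset V) : ℕ :=
  Set.ncard {W : Submodule (ZMod 2) (↥(Aᶜ) → ZMod 2) |
    ∃ S : Set ↥A, W = Submodule.span (ZMod 2) ((fun x => cutMatrix G A x) '' S)}

/-- the cut-rank of `A` is at most the union-count of `A`,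
i.e. `ρ_G(A) ≤ U_G(A)`, equivalently `log₂ ρ_G(A) ≤ β_G(A)`. -/
theorem cutRank_le_unionCount {V : Type*} [Fintype V] [DecidableEq V]
    (G : SimpleGraph V) (A : Finset V) :
    cutRank G A ≤ unionCount G A := by
  classical
  let f : ↥A → (↥(Aᶜ) → ZMod 2) := fun x => cutMatrix G A x
  have h1 : cutRank G A = Module.finrank (ZMod 2)
      (Submodule.span (ZMod 2) (Set.range f)) :=
    Matrix.rank_eq_finrank_span_row (cutMatrix G A)
  have h2 : cutRank G A ≤ (Set.range f).ncard := by
    rw [h1, Set.ncard_eq_toFinset_card']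
    exact finrank_span_le_card (Set.range f)
  -- map each row to its support, which is of the form N(Y)\A
  let Φ : (↥(Aᶜ) → ZMod 2) → Set V := fun v => {u | ∃ h : u ∈ Aᶜ, v ⟨u, h⟩ = 1}
  have hΦf : ∀ x : ↥A, Φ (f x) = G.neighborSet x.1 \ ↑A := by
    intro x
    ext u
    simp only [Φ, f, cutMatrix, Matrix.of_apply, Set.mem_setOf_eq, Set.mem_diff,
      SimpleGraph.mem_neighborSet, Finset.coe_mem, Set.mem_compl_iff,
      Finset.mem_coe, Finset.mem_compl]
    constructor
    · rintro ⟨h, hv⟩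
      by_cases hadj : G.Adj x.1 u
      · exact ⟨hadj, h⟩
      · simp [hadj] at hv
    · rintro ⟨hadj, hu⟩
      exact ⟨hu, by simp [hadj]⟩
  have hinj : Set.InjOn Φ (Set.range f) := by
    rintro v ⟨x, rfl⟩ w ⟨y, rfl⟩ h
    funext z
    have hx : ∀ (a : ↥A) (z : ↥(Aᶜ)), f a z = 1 ↔ (z : V) ∈ Φ (f a) := by
      intro a z
      simp only [Φ, Set.mem_setOf_eq]
      constructor
      · intro hz; exact ⟨z.2, by simpa using hz⟩
      · rintro ⟨h', hz⟩; simpa using hz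
    by_cases hz : (z : V) ∈ Φ (f x)
    · have h1 := (hx x z).mpr hz
      have h2 := (hx y z).mpr (h ▸ hz)
      rw [h1, h2]
    · have h1 : f x z ≠ 1 := fun hc => hz ((hx x z).mp hc)
      have h2 : f y z ≠ 1 := fun hc => hz (h.symm ▸ (hx y z).mp hc)
      have ha : f x z = 0 := by
        simp only [f, cutMatrix, Matrix.of_apply] at h1 ⊢
        split <;> simp_all
      have hb : f y z = 0 := by
        simp only [f, cutMatrix, Matrix.of_apply] at h2 ⊢
        split <;> simp_all
      rw [ha, hb]
  have hsub : Φ '' Set.range f ⊆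
      {S : Set V | ∃ Y : Set V, Y ⊆ ↑A ∧ (⋃ y ∈ Y, G.neighborSet y) \ ↑A = S} := by
    rintro S ⟨v, ⟨x, rfl⟩, rfl⟩
    refine ⟨{x.1}, by simp, ?_⟩
    rw [hΦf x]
    simp
  calc cutRank G A ≤ (Set.range f).ncard := h2
    _ = (Φ '' Set.range f).ncard := (Set.ncard_image_of_injOn hinj).symm
    _ ≤ _ := Set.ncard_le_ncard hsub (Set.toFinite _)
end

section
/- Let G be a finite simple graph and A a subset of V(G). Then U_G(A) ≤ nss_G(A); equivalently β_G(A) ≤ log₂ nss_G(A). That is, the number of distinct sets of the form N(Y)∖A with Y ⊆ A is at most the number of distinct GF(2)-linear spans of subsets of rows of the cut matrix of A. -/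
/-!
The set `N(Y) \ A` is the support of the span of the rows of the cut matrix indexed by `Y`:
a column is nonzero somewhere in a span exactly when it is nonzero on one of the spanning
vectors. So `W ↦ W.support` maps the spans of row sets onto the sets `N(Y) \ A`, and there are
at least as many of the former as of the latter.
-/

def Submodule.support {R ι : Type*} [Semiring R] (W : Submodule R (ι → R)) : Set ι :=
  {i | ∃ w ∈ W, w i ≠ 0}

theorem Submodule.support_span {R ι : Type*} [Semiring R] (s : Set (ι → R)) :
    (Submodule.span R s).support = {i | ∃ f ∈ s, f i ≠ 0} := by
  ext i
  refine ⟨fun ⟨w, hw, hwi⟩ => ?_, fun ⟨f, hf, hfi⟩ => ⟨f, Submodule.subset_span hf, hfi⟩⟩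
  change ∃ f ∈ s, f i ≠ 0
  by_contra! hs
  have : Submodule.span R s ≤ LinearMap.ker (LinearMap.proj i) :=
    Submodule.span_le.mpr fun f hf => LinearMap.mem_ker.mpr (hs f hf)
  exact hwi (this hw)

section CutMatrix

variable {V : Type*} [Fintype V] [DecidableEq V] (G : SimpleGraph V) (A : Finset V)

theorem cutMatrix_ne_zero_iff (x : ↥A) (y : ↥(Aᶜ)) : cutMatrix G A x y ≠ 0 ↔ G.Adj x y := by
  by_cases h : G.Adj x y <;> simp [cutMatrix, h]

theorem iUnion_neighborSet_diff_eq_image_support_span {Y : Set V} (hY : Y ⊆ A) :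
    (⋃ y ∈ Y, G.neighborSet y) \ A =
      Subtype.val '' (Submodule.span (ZMod 2)
        ((fun x => cutMatrix G A x) '' {x : ↥A | ↑x ∈ Y})).support := by
  rw [Submodule.support_span]
  simp only [Set.exists_mem_image]
  ext v
  simp only [Set.mem_ofPred_eq, cutMatrix_ne_zero_iff, Set.mem_image, Set.mem_sdiff, Set.mem_iUnion,
    SimpleGraph.mem_neighborSet, Subtype.exists, Finset.mem_compl, Finset.mem_coe]
  constructor
  · rintro ⟨⟨y, hy, hadj⟩, hv⟩
    exact ⟨v, hv, ⟨y, hY hy, hy, hadj⟩, rfl⟩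
  · rintro ⟨v, hv, ⟨y, -, hy, hadj⟩, rfl⟩
    exact ⟨⟨y, hy, hadj⟩, hv⟩

end CutMatrix

/-- the union-count of `A` is at most the number of GF(2)-spans of
subsets of rows of the cut matrix, i.e. `U_G(A) ≤ nss_G(A)`
(equivalently `β_G(A) ≤ log₂ nss_G(A)`). -/
theorem unionCount_le_nss {V : Type*} [Fintype V] [DecidableEq V]
    (G : SimpleGraph V) (A : Finset V) :
    unionCount G A ≤ nss G A := by
  set rowSpan : Set ↥A → Submodule (ZMod 2) (↥(Aᶜ) → ZMod 2) :=
    fun S => Submodule.span (ZMod 2) ((fun x => cutMatrix G A x) '' S)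
  have spans_finite : {W | ∃ S, W = rowSpan S}.Finite :=
    (Set.finite_range rowSpan).subset fun _ ⟨S, hS⟩ => ⟨S, hS.symm⟩
  have unions_subset : {S : Set V | ∃ Y : Set V, Y ⊆ ↑A ∧ (⋃ y ∈ Y, G.neighborSet y) \ ↑A = S}
      ⊆ (fun W => Subtype.val '' W.support) '' {W | ∃ S, W = rowSpan S} := by
    rintro _ ⟨Y, hY, rfl⟩
    exact ⟨_, ⟨_, rfl⟩, (iUnion_neighborSet_diff_eq_image_support_span G A hY).symm⟩
  calc unionCount G A ≤ _ := Set.ncard_le_ncard unions_subset (spans_finite.image _)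
    _ ≤ nss G A := Set.ncard_image_le spans_finite
end

section
/- Let G be a finite simple graph and A ⊆ V(G) with cut-rank r = ρ_G(A) ≥ 1. Then nss_G(A) ≤ r · 2^{(r² + 5r)/4} (as an inequality of real numbers). That is, the number of distinct GF(2)-spans of subsets of rows of the cut matrix of A is at most 2^{ρ_G(A)²/4 + 5ρ_G(A)/4} · ρ_G(A). -/
/-!
The spans of sets of rows are subspaces of the row space, an `r`-dimensional space over a field
with `q = 2` elements. A `k`-dimensional subspace has `∏_{i<k} (q^k - q^i) ≥ q^{k(k-1)}` ordered bases,
and distinct subspaces have disjoint sets of bases among the `q^{rk}` `k`-tuples of vectors, so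
there are at most `q^{k(r+1-k)} ≤ q^{(r+1)²/4}` of them. Summing over `k ≤ r` gives
`(r+1) q^{(r+1)²/4} ≤ r q^{(r²+5r)/4}` for `r ≥ 2`; for `r = 1` the only subspaces are `0` and
the whole space.
-/

open Module Submodule

theorem pow_mul_sub_one_le_prod_pow_sub_pow {q : ℕ} (hq : 2 ≤ q) (k : ℕ) :
    q ^ (k * (k - 1)) ≤ ∏ i : Fin k, (q ^ k - q ^ (i : ℕ)) := by
  have hconst : q ^ (k * (k - 1)) = ∏ _i : Fin k, q ^ (k - 1) := by
    rw [Finset.prod_const, Finset.card_univ, Fintype.card_fin, ← pow_mul, mul_comm]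
  rw [hconst]
  refine Finset.prod_le_prod' fun i _ => ?_
  have hk : k = k - 1 + 1 := by have := i.pos; omega
  have hi : q ^ (i : ℕ) ≤ q ^ (k - 1) := Nat.pow_le_pow_right (by omega) (by omega)
  have hqk : 2 * q ^ (k - 1) ≤ q ^ k := by
    rw [hk, pow_succ', Nat.add_sub_cancel]
    exact Nat.mul_le_mul_right _ hq
  omega

theorem card_submodule_eq_two_of_finrank_eq_one {K V : Type*} [DivisionRing K] [AddCommGroup V]
    [Module K V] (h : finrank K V = 1) : Nat.card (Submodule K V) = 2 := by
  classical
  have : IsSimpleModule K V := isSimpleModule_iff_finrank_eq_one.mpr h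
  rw [Nat.card_congr IsSimpleOrder.equivBool, Nat.card_eq_fintype_card, Fintype.card_bool]

theorem ncard_setOf_span_image_le {R M ι : Type*} [Semiring R] [AddCommMonoid M] [Module R M]
    [Finite M] (v : ι → M) :
    {W : Submodule R M | ∃ S : Set ι, W = span R (v '' S)}.ncard
      ≤ Nat.card (Submodule R (span R (Set.range v))) := by
  rw [Nat.card_congr (mapIic _).toEquiv, Nat.card_coe_set_eq]
  refine Set.ncard_le_ncard ?_
  rintro _ ⟨S, rfl⟩
  exact span_mono (Set.image_subset_range v S)

section FiniteField

variable {K V : Type*} [Field K] [Fintype K] [AddCommGroup V] [Module K V] [Finite V]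

theorem card_finrank_eq_mul_prod_le (k : ℕ) :
    Nat.card {W : Submodule K V // finrank K W = k}
      * ∏ i : Fin k, (Fintype.card K ^ k - Fintype.card K ^ (i : ℕ)) ≤ Nat.card V ^ k := by
  have := Fintype.ofFinite {W : Submodule K V // finrank K W = k}
  have hbases (W : {W : Submodule K V // finrank K W = k}) :
      Nat.card {s : Fin k → W.1 // LinearIndependent K s}
        = ∏ i : Fin k, (Fintype.card K ^ k - Fintype.card K ^ (i : ℕ)) := by
    rw [card_linearIndependent W.2.ge, W.2]
  let f : (Σ W : {W : Submodule K V // finrank K W = k},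
      {s : Fin k → W.1 // LinearIndependent K s}) → (Fin k → V) :=
    fun p => p.1.1.subtype ∘ p.2.1
  have hspan (p) : span K (Set.range (f p)) = p.1.1 := by
    obtain ⟨⟨W, hW⟩, s, hs⟩ := p
    have : span K (Set.range s) = ⊤ :=
      hs.span_eq_top_of_card_eq_finrank' (by rw [Fintype.card_fin, hW])
    rw [Set.range_comp, span_image, this, Submodule.map_top, range_subtype]
  have hf : Function.Injective f := by
    rintro p ⟨W', s'⟩ h
    obtain ⟨W, s⟩ := p
    obtain rfl : W = W' := Subtype.ext (by rw [← hspan ⟨W, s⟩, ← hspan ⟨W', s'⟩, h])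
    obtain rfl : s = s' := Subtype.ext (funext fun i => Subtype.ext (congrFun h i))
    rfl
  calc _ = Nat.card (Σ W : {W : Submodule K V // finrank K W = k},
        {s : Fin k → W.1 // LinearIndependent K s}) := by
        rw [Nat.card_sigma, Finset.sum_congr rfl fun W _ => hbases W, Finset.sum_const,
          smul_eq_mul, Finset.card_univ, Nat.card_eq_fintype_card]
    _ ≤ Nat.card (Fin k → V) := Nat.card_le_card_of_injective f hf
    _ = Nat.card V ^ k := by rw [Nat.card_fun, Nat.card_fin]

theorem card_finrank_eq_le_pow {r k : ℕ} (hr : finrank K V = r) (hk : k ≤ r) :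
    Nat.card {W : Submodule K V // finrank K W = k} ≤ Fintype.card K ^ (k * (r + 1 - k)) := by
  have hq : 2 ≤ Fintype.card K := Fintype.one_lt_card
  have hexp : k * (r + 1 - k) + k * (k - 1) = r * k := by
    obtain ⟨m, rfl⟩ := Nat.exists_eq_add_of_le hk
    rcases k with _ | k
    · simp
    · rw [show k + 1 + m + 1 - (k + 1) = m + 1 by omega, Nat.add_sub_cancel]
      ring
  refine Nat.le_of_mul_le_mul_right ?_ (pow_pos (by omega : 0 < Fintype.card K) (k * (k - 1)))
  calc _ ≤ Nat.card {W : Submodule K V // finrank K W = k}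
        * ∏ i : Fin k, (Fintype.card K ^ k - Fintype.card K ^ (i : ℕ)) :=
        Nat.mul_le_mul_left _ (pow_mul_sub_one_le_prod_pow_sub_pow hq k)
    _ ≤ Nat.card V ^ k := card_finrank_eq_mul_prod_le k
    _ = _ := by
        rw [natCard_eq_pow_finrank (K := K), hr, Nat.card_eq_fintype_card, ← pow_mul, ← pow_add,
          hexp]

theorem card_submodule_le_succ_mul_rpow {r : ℕ} (hr : finrank K V = r) :
    (Nat.card (Submodule K V) : ℝ)
      ≤ (r + 1) * (Fintype.card K : ℝ) ^ (((r : ℝ) + 1) ^ 2 / 4) := by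
  have hq : (1 : ℝ) ≤ Fintype.card K := by exact_mod_cast Fintype.card_pos
  let byRank : Submodule K V ≃ Σ k : Fin (r + 1), {W : Submodule K V // finrank K W = k} :=
    { toFun W := ⟨⟨finrank K W, Nat.lt_succ_of_le (hr ▸ W.finrank_le)⟩, W, rfl⟩
      invFun p := p.2.1
      left_inv _ := rfl
      right_inv p := Sigma.subtype_ext (Fin.ext p.2.2) rfl }
  have hterm (k : Fin (r + 1)) : (Nat.card {W : Submodule K V // finrank K W = k} : ℝ)
      ≤ (Fintype.card K : ℝ) ^ (((r : ℝ) + 1) ^ 2 / 4) := by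
    have hk : (k : ℕ) ≤ r := Nat.lt_succ_iff.mp k.2
    calc _ ≤ ((Fintype.card K ^ ((k : ℕ) * (r + 1 - k)) : ℕ) : ℝ) := by
          exact_mod_cast card_finrank_eq_le_pow hr hk
      _ = (Fintype.card K : ℝ) ^ ((((k : ℕ) * (r + 1 - k) : ℕ) : ℝ)) := by
          rw [Real.rpow_natCast, Nat.cast_pow]
      _ ≤ _ := by
          refine Real.rpow_le_rpow_of_exponent_le hq ?_
          have hk' : ((k : ℕ) : ℝ) ≤ r := by exact_mod_cast hk
          push_cast [Nat.cast_sub (by omega : (k : ℕ) ≤ r + 1)]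
          nlinarith [sq_nonneg ((r : ℝ) + 1 - 2 * (k : ℕ))]
  calc (Nat.card (Submodule K V) : ℝ)
      = ∑ k : Fin (r + 1), (Nat.card {W : Submodule K V // finrank K W = k} : ℝ) := by
        rw [Nat.card_congr byRank, Nat.card_sigma]; push_cast; rfl
    _ ≤ ∑ _k : Fin (r + 1), (Fintype.card K : ℝ) ^ (((r : ℝ) + 1) ^ 2 / 4) :=
        Finset.sum_le_sum fun k _ => hterm k
    _ = _ := by simp

theorem card_submodule_le_mul_rpow {r : ℕ} (hr : finrank K V = r) (hr1 : 1 ≤ r) :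
    (Nat.card (Submodule K V) : ℝ)
      ≤ r * (Fintype.card K : ℝ) ^ (((r : ℝ) ^ 2 + 5 * r) / 4) := by
  have hq : (2 : ℝ) ≤ Fintype.card K := by exact_mod_cast Fintype.one_lt_card
  rcases hr1.eq_or_lt with rfl | hr2
  · rw [card_submodule_eq_two_of_finrank_eq_one hr]
    calc (2 : ℝ) ≤ (Fintype.card K : ℝ) ^ (1 : ℝ) := by rwa [Real.rpow_one]
      _ ≤ _ := by
          rw [Nat.cast_one, one_mul]
          exact Real.rpow_le_rpow_of_exponent_le (by linarith) (by norm_num)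
  · have hr2' : (2 : ℝ) ≤ r := by exact_mod_cast hr2
    calc _ ≤ (r + 1) * (Fintype.card K : ℝ) ^ (((r : ℝ) + 1) ^ 2 / 4) := card_submodule_le_succ_mul_rpow hr
      _ ≤ (r * Fintype.card K) * (Fintype.card K : ℝ) ^ (((r : ℝ) + 1) ^ 2 / 4) := by
          gcongr; nlinarith
      _ = r * (Fintype.card K : ℝ) ^ (1 + ((r : ℝ) + 1) ^ 2 / 4) := by
          rw [Real.rpow_add (by linarith), Real.rpow_one, mul_assoc]
      _ ≤ _ := by
          gcongr
          · linarith
          · nlinarith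

end FiniteField

/-- if `r = ρ_G(A) ≥ 1` then `nss_G(A) ≤ r · 2^((r² + 5r)/4)`
as an inequality of real numbers. -/
theorem nss_le_of_cutRank {V : Type*} [Fintype V] [DecidableEq V]
    (G : SimpleGraph V) (A : Finset V) (r : ℕ) (hr : r = cutRank G A) (hr1 : 1 ≤ r) :
    (nss G A : ℝ) ≤ (r : ℝ) * (2 : ℝ) ^ ((((r : ℝ)) ^ 2 + 5 * (r : ℝ)) / 4) := by
  have hrank : finrank (ZMod 2) (span (ZMod 2) (Set.range (cutMatrix G A))) = r := by
    rw [hr, cutRank, Matrix.rank_eq_finrank_span_row]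
    rfl
  calc (nss G A : ℝ)
      ≤ Nat.card (Submodule (ZMod 2) (span (ZMod 2) (Set.range (cutMatrix G A)))) := by
        exact_mod_cast ncard_setOf_span_image_le (cutMatrix G A)
    _ ≤ _ := by
        simpa only [ZMod.card, Nat.cast_ofNat] using card_submodule_le_mul_rpow hrank hr1
end

section
/- For every integer n ≥ 1, the total number of GF(2)-linear subspaces of the vector space (ZMod 2)^n is at most n · 2^{(n² + 5n)/4} (as an inequality of real numbers). -/
open Module

-- product lower bound
lemma aux_prod (k : ℕ) :
    (1:ℝ)/4 + (2⁻¹:ℝ)^(k+1) ≤ ∏ j ∈ Finset.range k, (1 - (2⁻¹:ℝ)^(j+1)) := by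
  induction k with
  | zero => norm_num
  | succ k ih =>
    rw [Finset.prod_range_succ]
    rcases Nat.eq_zero_or_pos k with rfl | hk
    · norm_num
    have hp : (2⁻¹:ℝ)^(k+1) ≤ 1/4 := by
      calc (2⁻¹:ℝ)^(k+1) ≤ (2⁻¹:ℝ)^2 := by
            apply pow_le_pow_of_le_one (by norm_num) (by norm_num); omega
        _ = 1/4 := by norm_num
    have hp0 : (0:ℝ) ≤ (2⁻¹:ℝ)^(k+1) := by positivity
    have h2 : (2⁻¹:ℝ)^(k+1+1) = (2⁻¹:ℝ)^(k+1) * 2⁻¹ := by ring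
    nlinarith [ih, hp, hp0]

lemma gl_card (k : ℕ) :
    Nat.card ((Fin k → ZMod 2) ≃ₗ[ZMod 2] (Fin k → ZMod 2)) =
      ∏ i : Fin k, (2 ^ k - 2 ^ (i : ℕ)) := by
  rw [← Nat.card_congr ((Matrix.GeneralLinearGroup.toLin).trans
    (LinearMap.GeneralLinearGroup.generalLinearEquiv (ZMod 2) (Fin k → ZMod 2))).toEquiv]
  rw [Matrix.card_GL_field]
  simp [ZMod.card]

lemma gl_lb (k : ℕ) :
    (2:ℝ) ^ (k*k) / 4 ≤
      (Nat.card ((Fin k → ZMod 2) ≃ₗ[ZMod 2] (Fin k → ZMod 2)) : ℝ) := by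
  rw [gl_card]
  have hcast : ((∏ i : Fin k, (2 ^ k - 2 ^ (i : ℕ)) : ℕ) : ℝ)
      = ∏ i ∈ Finset.range k, ((2:ℝ) ^ k - 2 ^ i) := by
    rw [Nat.cast_prod, ← Fin.prod_univ_eq_prod_range (fun i => ((2:ℝ) ^ k - 2 ^ i)) k]
    refine Finset.prod_congr rfl fun i _ => ?_
    have : (2:ℕ) ^ (i:ℕ) ≤ 2 ^ k :=
      Nat.pow_le_pow_right (by norm_num) i.2.le
    push_cast [Nat.cast_sub this]
    ring
  rw [hcast]
  have hfac : ∀ i ∈ Finset.range k, (2:ℝ) ^ k - 2 ^ i = 2 ^ k * (1 - (2⁻¹:ℝ) ^ (k - i)) := by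
    intro i hi
    have hik : i ≤ k := (Finset.mem_range.mp hi).le
    have : (2:ℝ) ^ k * (2⁻¹:ℝ) ^ (k - i) = 2 ^ i := by
      have hne : ((2:ℝ) ^ (k-i)) ≠ 0 := by positivity
      rw [inv_pow]
      field_simp
      rw [← pow_add]
      congr 1; omega
    rw [mul_sub, mul_one, this]
  rw [Finset.prod_congr rfl hfac, Finset.prod_mul_distrib, Finset.prod_const,
    Finset.card_range, ← pow_mul]
  have hrefl : ∏ i ∈ Finset.range k, (1 - (2⁻¹:ℝ) ^ (k - i))
      = ∏ j ∈ Finset.range k, (1 - (2⁻¹:ℝ) ^ (j + 1)) := by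
    rw [← Finset.prod_range_reflect]
    refine Finset.prod_congr rfl fun j hj => ?_
    have : k - (k - 1 - j) = j + 1 := by
      have := Finset.mem_range.mp hj; omega
    rw [this]
  rw [hrefl]
  have h1 : (1:ℝ)/4 ≤ ∏ j ∈ Finset.range k, (1 - (2⁻¹:ℝ) ^ (j + 1)) := by
    have := aux_prod k
    have : (0:ℝ) ≤ (2⁻¹:ℝ)^(k+1) := by positivity
    linarith [aux_prod k]
  have h2 : (0:ℝ) ≤ (2:ℝ) ^ (k*k) := by positivity
  calc (2:ℝ) ^ (k*k) / 4 = (2:ℝ) ^ (k*k) * (1/4) := by ring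
    _ ≤ _ := by exact mul_le_mul_of_nonneg_left h1 h2

noncomputable def eW {n k : ℕ} (W : Submodule (ZMod 2) (Fin n → ZMod 2))
    (hW : finrank (ZMod 2) W = k) : (Fin k → ZMod 2) ≃ₗ[ZMod 2] W :=
  LinearEquiv.ofFinrankEq _ _ (by
    rw [Module.finrank_fintype_fun_eq_card, Fintype.card_fin, hW])

lemma fiber_mul_le (n k : ℕ) :
    Nat.card {W : Submodule (ZMod 2) (Fin n → ZMod 2) // finrank (ZMod 2) W = k} *
      Nat.card ((Fin k → ZMod 2) ≃ₗ[ZMod 2] (Fin k → ZMod 2)) ≤ 2 ^ (n * k) := by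
  classical
  haveI : Finite ((Fin k → ZMod 2) →ₗ[ZMod 2] (Fin n → ZMod 2)) :=
    Finite.of_injective _ (DFunLike.coe_injective)
  have hhom : Nat.card ((Fin k → ZMod 2) →ₗ[ZMod 2] (Fin n → ZMod 2)) = 2 ^ (n * k) := by
    rw [Nat.card_congr ((LinearMap.toMatrix (Pi.basisFun (ZMod 2) (Fin k))
      (Pi.basisFun (ZMod 2) (Fin n))).toEquiv.trans Matrix.of.symm)]
    rw [Nat.card_fun, Nat.card_fun]
    simp only [Nat.card_eq_fintype_card, ZMod.card, Fintype.card_fin]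
    rw [← pow_mul, mul_comm]
  rw [← hhom, ← Nat.card_prod]
  apply Nat.card_le_card_of_injective
    (f := fun p : {W : Submodule (ZMod 2) (Fin n → ZMod 2) // finrank (ZMod 2) W = k} ×
        ((Fin k → ZMod 2) ≃ₗ[ZMod 2] (Fin k → ZMod 2)) =>
      p.1.1.subtype ∘ₗ ((eW p.1.1 p.1.2).toLinearMap ∘ₗ p.2.toLinearMap))
  rintro ⟨⟨W, hW⟩, g⟩ ⟨⟨W', hW'⟩, g'⟩ h
  dsimp only at h
  have hrange : ∀ (W : Submodule (ZMod 2) (Fin n → ZMod 2)) (hW : finrank (ZMod 2) W = k)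
      (g : (Fin k → ZMod 2) ≃ₗ[ZMod 2] (Fin k → ZMod 2)),
      LinearMap.range (W.subtype ∘ₗ ((eW W hW).toLinearMap ∘ₗ g.toLinearMap)) = W := by
    intro W hW g
    simp [LinearMap.range_comp, LinearEquiv.range, Submodule.map_top, Submodule.range_subtype]
  have hWW' : W = W' := by
    have h2 := congrArg LinearMap.range h
    rwa [hrange, hrange] at h2
  subst hWW'
  have hg : g = g' := by
    refine LinearEquiv.ext fun x => ?_
    have h3 := congrFun (congrArg DFunLike.coe h) x
    have h4 : ((eW W hW) (g x) : Fin n → ZMod 2) = ((eW W hW') (g' x) : Fin n → ZMod 2) := h3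
    have h5 : (eW W hW) (g x) = (eW W hW') (g' x) := Subtype.ext h4
    have h6 : (eW W hW) (g x) = (eW W hW) (g' x) := h5
    exact (eW W hW).injective h6
  exact Prod.ext (Subtype.ext rfl) hg

lemma fiber_real (n k : ℕ) (hk : k ≤ n) :
    (Nat.card {W : Submodule (ZMod 2) (Fin n → ZMod 2) // finrank (ZMod 2) W = k} : ℝ) ≤
      4 * (2:ℝ) ^ (k * (n - k)) := by
  have h1 := fiber_mul_le n k
  have h2 := gl_lb k
  have hsplit : n * k = k * k + k * (n - k) := by
    rw [← Nat.mul_add, Nat.add_sub_cancel' hk, mul_comm]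
  set C := (Nat.card {W : Submodule (ZMod 2) (Fin n → ZMod 2) // finrank (ZMod 2) W = k} : ℝ)
    with hC
  have hC0 : (0:ℝ) ≤ C := Nat.cast_nonneg _
  have h1' : C * (Nat.card ((Fin k → ZMod 2) ≃ₗ[ZMod 2] (Fin k → ZMod 2)) : ℝ)
      ≤ (2:ℝ) ^ (n * k) := by
    rw [hC, ← Nat.cast_mul]
    exact_mod_cast h1
  have h3 : C * ((2:ℝ) ^ (k*k) / 4) ≤ (2:ℝ) ^ (k*k) * (2:ℝ) ^ (k * (n-k)) := by
    calc C * ((2:ℝ) ^ (k*k) / 4) ≤ C * _ := mul_le_mul_of_nonneg_left h2 hC0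
      _ ≤ (2:ℝ) ^ (n*k) := h1'
      _ = _ := by rw [hsplit, pow_add]
  have hpos : (0:ℝ) < (2:ℝ) ^ (k*k) := by positivity
  have h4 : C * (1/4) * (2:ℝ)^(k*k) ≤ (2:ℝ) ^ (k*(n-k)) * (2:ℝ)^(k*k) := by
    nlinarith
  have h5 := le_of_mul_le_mul_right h4 hpos
  linarith

lemma card_le_one_of_subsingleton (α : Type*) [Subsingleton α] : Nat.card α ≤ 1 := by
  rcases isEmpty_or_nonempty α with h | h
  · simp [Nat.card_of_isEmpty]
  · simp [Nat.card_unique]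

set_option maxHeartbeats 2000000 in
/-- for every `n ≥ 1`, the total number of GF(2)-linear subspaces of
`(ZMod 2)^n` is at most `n · 2^((n² + 5n)/4)` as an inequality of real numbers. -/
theorem card_submodules_le (n : ℕ) (hn : 1 ≤ n) :
    (Nat.card (Submodule (ZMod 2) (Fin n → ZMod 2)) : ℝ) ≤
      (n : ℝ) * (2 : ℝ) ^ ((((n : ℝ)) ^ 2 + 5 * (n : ℝ)) / 4) := by
  classical
  haveI : Finite (Submodule (ZMod 2) (Fin n → ZMod 2)) :=
    Finite.of_injective _ SetLike.coe_injective
  haveI := Fintype.ofFinite (Submodule (ZMod 2) (Fin n → ZMod 2))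
  have hfrV : finrank (ZMod 2) (Fin n → ZMod 2) = n := by
    rw [Module.finrank_fintype_fun_eq_card, Fintype.card_fin]
  -- decomposition
  have hdecomp : Nat.card (Submodule (ZMod 2) (Fin n → ZMod 2)) =
      ∑ k ∈ Finset.range (n+1),
        Nat.card {W : Submodule (ZMod 2) (Fin n → ZMod 2) // finrank (ZMod 2) W = k} := by
    rw [Nat.card_eq_fintype_card, ← Finset.card_univ,
      Finset.card_eq_sum_card_fiberwise
        (f := fun W : Submodule (ZMod 2) (Fin n → ZMod 2) => finrank (ZMod 2) W)
        (t := Finset.range (n+1))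
        (fun W _ => Finset.mem_range.mpr (Nat.lt_succ_of_le
          (le_trans (Submodule.finrank_le W) (le_of_eq hfrV))))]
    refine Finset.sum_congr rfl fun k _ => ?_
    rw [Nat.card_eq_fintype_card, Fintype.card_subtype]
  -- bounds on the extreme fibers
  have hsub0 : Nat.card {W : Submodule (ZMod 2) (Fin n → ZMod 2) //
      finrank (ZMod 2) W = 0} ≤ 1 := by
    haveI : Subsingleton {W : Submodule (ZMod 2) (Fin n → ZMod 2) //
        finrank (ZMod 2) W = 0} := by
      constructor
      rintro ⟨W, hW⟩ ⟨W', hW'⟩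
      have h1 : W = ⊥ := Submodule.finrank_eq_zero.mp hW
      have h2 : W' = ⊥ := Submodule.finrank_eq_zero.mp hW'
      exact Subtype.ext (h1.trans h2.symm)
    exact card_le_one_of_subsingleton _
  have hsubn : Nat.card {W : Submodule (ZMod 2) (Fin n → ZMod 2) //
      finrank (ZMod 2) W = n} ≤ 1 := by
    haveI : Subsingleton {W : Submodule (ZMod 2) (Fin n → ZMod 2) //
        finrank (ZMod 2) W = n} := by
      constructor
      rintro ⟨W, hW⟩ ⟨W', hW'⟩
      have h1 : W = ⊤ := Submodule.eq_top_of_finrank_eq (by rw [hW, hfrV])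
      have h2 : W' = ⊤ := Submodule.eq_top_of_finrank_eq (by rw [hW', hfrV])
      exact Subtype.ext (h1.trans h2.symm)
    exact card_le_one_of_subsingleton _
  -- real quantities
  set X : ℝ := (2:ℝ) ^ (((n:ℝ)^2)/4) with hX
  set Y : ℝ := (2:ℝ) ^ ((5*(n:ℝ))/4) with hY
  have hX1 : (1:ℝ) ≤ X := by
    rw [hX]
    calc (1:ℝ) = (2:ℝ) ^ (0:ℝ) := by rw [Real.rpow_zero]
      _ ≤ _ := Real.rpow_le_rpow_of_exponent_le one_le_two (by positivity)
  have hYn : (n:ℝ) + 1 ≤ Y := by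
    have h1 : (n:ℝ) + 1 ≤ (2:ℝ) ^ (n:ℕ) := by
      have := one_add_mul_le_pow (a := (1:ℝ)) (by norm_num) n
      norm_num at this
      linarith
    calc (n:ℝ) + 1 ≤ (2:ℝ) ^ (n:ℕ) := h1
      _ = (2:ℝ) ^ ((n:ℕ):ℝ) := (Real.rpow_natCast 2 n).symm
      _ ≤ Y := Real.rpow_le_rpow_of_exponent_le one_le_two (by
          push_cast; linarith [(Nat.one_le_cast (α := ℝ)).mpr hn])
  -- per-fiber real bound
  have hfib : ∀ k ≤ n,
      (Nat.card {W : Submodule (ZMod 2) (Fin n → ZMod 2) //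
        finrank (ZMod 2) W = k} : ℝ) ≤ 4 * X := by
    intro k hk
    refine le_trans (fiber_real n k hk) ?_
    have hexp : ((k * (n - k) : ℕ) : ℝ) ≤ ((n:ℝ)^2)/4 := by
      have hkn : (k:ℝ) ≤ (n:ℝ) := Nat.cast_le.mpr hk
      push_cast [Nat.cast_sub hk]
      nlinarith [sq_nonneg ((n:ℝ) - 2*(k:ℝ))]
    have : (2:ℝ) ^ (k * (n - k)) ≤ X := by
      rw [hX, ← Real.rpow_natCast 2 (k * (n-k))]
      exact Real.rpow_le_rpow_of_exponent_le one_le_two hexp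
    linarith
  -- assemble
  obtain ⟨m, rfl⟩ : ∃ m, n = m + 1 := ⟨n - 1, by omega⟩
  rw [hdecomp]
  push_cast
  rw [Finset.sum_range_succ, Finset.sum_range_succ']
  have hmid : ∑ i ∈ Finset.range m,
      (Nat.card {W : Submodule (ZMod 2) (Fin (m+1) → ZMod 2) //
        finrank (ZMod 2) W = i + 1} : ℝ) ≤ (m:ℝ) * (4 * X) := by
    calc _ ≤ ∑ _i ∈ Finset.range m, (4*X) :=
          Finset.sum_le_sum fun i hi => hfib (i+1) (by
            have := Finset.mem_range.mp hi; omega)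
      _ = (m:ℝ) * (4*X) := by rw [Finset.sum_const, Finset.card_range]; ring
  have h0 : (Nat.card {W : Submodule (ZMod 2) (Fin (m+1) → ZMod 2) //
      finrank (ZMod 2) W = 0} : ℝ) ≤ 1 := by exact_mod_cast hsub0
  have hn' : (Nat.card {W : Submodule (ZMod 2) (Fin (m+1) → ZMod 2) //
      finrank (ZMod 2) W = m + 1} : ℝ) ≤ 1 := by exact_mod_cast hsubn
  have hrhs : ((m+1:ℕ) : ℝ) * (2:ℝ) ^ ((((m+1:ℕ):ℝ)^2 + 5*((m+1:ℕ):ℝ))/4)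
      = ((m+1:ℕ):ℝ) * (X * Y) := by
    rw [hX, hY, ← Real.rpow_add (by norm_num)]
    congr 1
    ring_nf
  have hm2 : (m:ℝ) ≤ (m:ℝ) * (m:ℝ) := by
    rcases Nat.eq_zero_or_pos m with rfl | hm
    · norm_num
    · nlinarith [(Nat.one_le_cast (α := ℝ)).mpr hm]
  have hX0 : (0:ℝ) ≤ X := by positivity
  have hm0 : (0:ℝ) ≤ (m:ℝ) := Nat.cast_nonneg m
  have hYn' : (m:ℝ) + 2 ≤ Y := by push_cast at hYn; linarith
  have key1 : ((m:ℝ)+1) * (X*((m:ℝ)+2)) ≤ ((m:ℝ)+1) * (X*Y) :=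
    mul_le_mul_of_nonneg_left (mul_le_mul_of_nonneg_left hYn' hX0) (by linarith)
  have key2 : ((m:ℝ)+1)*(X*((m:ℝ)+2)) = ((m:ℝ)*(m:ℝ)+3*(m:ℝ)+2)*X := by ring
  calc _ ≤ (1:ℝ) + (m:ℝ)*(4*X) + 1 := by
        push_cast
        linarith
    _ ≤ ((m:ℝ)+1) * (X * Y) := by
        nlinarith [key1, key2, hm2, hX1, hX0, hm0]
    _ = _ := by push_cast at hrhs ⊢; linarith [hrhs]
end

section
/- For all integers 0 ≤ m ≤ n, the number of m-dimensional GF(2)-subspaces of the vector space (ZMod 2)^n is at most the number of ⌈n/2⌉-dimensional GF(2)-subspaces of (ZMod 2)^n. -/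
open Module Submodule

section Basics

variable {K : Type*} [Field K] {V : Type*} [AddCommGroup V] [Module K V]
variable {V₂ : Type*} [AddCommGroup V₂] [Module K V₂]

/-- Transfer the count of `k`-dimensional subspaces along a linear equivalence. -/
lemma card_subspaces_congr (e : V ≃ₗ[K] V₂) (k : ℕ) :
    Nat.card {W : Submodule K V // finrank K W = k} =
      Nat.card {W : Submodule K V₂ // finrank K W = k} := by
  apply Nat.card_congr
  exact Equiv.subtypeEquiv (Submodule.orderIsoMapComap e).toEquiv
    (fun W => by
      have : ((Submodule.orderIsoMapComap e).toEquiv W : Submodule K V₂) =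
          W.map (e : V →ₗ[K] V₂) := rfl
      rw [this, LinearEquiv.finrank_map_eq])

lemma finrank_dualAnnihilator [FiniteDimensional K V] (W : Subspace K V) :
    finrank K W.dualAnnihilator = finrank K V - finrank K W := by
  have h := Subspace.finrank_add_finrank_dualCoannihilator_eq W.dualAnnihilator
  rw [Subspace.dualAnnihilator_dualCoannihilator_eq] at h
  omega

/-- Duality: the number of `k`-dimensional subspaces equals the number of subspaces of
codimension `k`. -/
lemma card_subspaces_codim [FiniteDimensional K V] (k : ℕ) (hk : k ≤ finrank K V) :
    Nat.card {W : Submodule K V // finrank K W = k} =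
      Nat.card {W : Submodule K V // finrank K W = finrank K V - k} := by
  have e : Module.Dual K V ≃ₗ[K] V :=
    LinearEquiv.ofFinrankEq _ _ (Subspace.dual_finrank_eq)
  rw [← card_subspaces_congr e (finrank K V - k)]
  apply Nat.card_congr
  refine ⟨fun W => ⟨W.1.dualAnnihilator, by rw [finrank_dualAnnihilator, W.2]⟩,
    fun Φ => ⟨Φ.1.dualCoannihilator, ?_⟩, ?_, ?_⟩
  · have h := Subspace.finrank_add_finrank_dualCoannihilator_eq Φ.1
    rw [Φ.2] at h
    omega
  · rintro ⟨W, hW⟩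
    exact Subtype.ext (Subspace.dualAnnihilator_dualCoannihilator_eq)
  · rintro ⟨Φ, hΦ⟩
    exact Subtype.ext (Subspace.dualCoannihilator_dualAnnihilator_eq)

end Basics

section Lines

variable (V : Type*) [AddCommGroup V] [Module (ZMod 2) V] [Module.Finite (ZMod 2) V]

/-- Over GF(2), one-dimensional subspaces biject with nonzero vectors. -/
lemma card_lines :
    Nat.card {W : Submodule (ZMod 2) V // finrank (ZMod 2) W = 1} =
      2 ^ finrank (ZMod 2) V - 1 := by
  classical
  have : Finite V := Module.finite_of_finite (ZMod 2)
  have : Fintype V := Fintype.ofFinite V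
  have key : ∀ c : ZMod 2, c = 0 ∨ c = 1 := by decide
  let f : {v : V // v ≠ 0} → {W : Submodule (ZMod 2) V // finrank (ZMod 2) W = 1} :=
    fun v => ⟨(ZMod 2) ∙ v.1, finrank_span_singleton v.2⟩
  have hinj : Function.Injective f := by
    rintro ⟨v, hv⟩ ⟨w, hw⟩ h
    simp only [f, Subtype.mk.injEq] at h ⊢
    have hw' : w ∈ (ZMod 2) ∙ v := by rw [h]; exact mem_span_singleton_self w
    rcases mem_span_singleton.mp hw' with ⟨c, hc⟩
    rcases key c with rfl | rfl
    · rw [zero_smul] at hc; exact absurd hc.symm hw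
    · rw [one_smul] at hc; exact hc
  have hsurj : Function.Surjective f := by
    rintro ⟨W, hW⟩
    obtain ⟨v, hv, hv'⟩ := (finrank_eq_one_iff' (K := ZMod 2) (V := W)).mp hW
    have hv0 : (v : V) ≠ 0 := fun h => hv (Subtype.ext h)
    refine ⟨⟨v, hv0⟩, Subtype.ext ?_⟩
    apply le_antisymm
    · rw [span_singleton_le_iff_mem]; exact v.2
    · intro w hw
      obtain ⟨c, hc⟩ := hv' ⟨w, hw⟩
      have : c • (v : V) = w := congrArg Subtype.val hc
      exact this ▸ smul_mem _ c (mem_span_singleton_self _)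
  have hcard : Nat.card {v : V // v ≠ 0} = 2 ^ finrank (ZMod 2) V - 1 := by
    rw [Nat.card_eq_fintype_card, Fintype.card_subtype_compl, Fintype.card_subtype_eq (0 : V)]
    congr 1
    have := card_eq_pow_finrank (K := ZMod 2) (V := V)
    rwa [ZMod.card] at this
  rw [← hcard]
  exact (Nat.card_congr (Equiv.ofBijective f ⟨hinj, hsurj⟩)).symm

end Lines

section Fibers

variable {K : Type*} [Field K] {V : Type*} [AddCommGroup V] [Module K V]

lemma finrank_comap_mkQ [FiniteDimensional K V] (W : Submodule K V)
    (U : Submodule K (V ⧸ W)) :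
    finrank K (U.comap W.mkQ) = finrank K U + finrank K W := by
  set P := U.comap W.mkQ with hP
  have hWP : W ≤ P := fun x hx => by
    simp [hP, Submodule.mem_comap, (Submodule.Quotient.mk_eq_zero W).mpr hx]
  let g : P →ₗ[K] V ⧸ W := W.mkQ.comp P.subtype
  have hrank := LinearMap.finrank_range_add_finrank_ker g
  have hrange : LinearMap.range g = U := by
    rw [LinearMap.range_comp, Submodule.range_subtype, hP]
    exact Submodule.map_comap_eq_of_surjective (Submodule.mkQ_surjective W) U
  have hker : LinearMap.ker g = W.comap P.subtype := by
    rw [LinearMap.ker_comp, Submodule.ker_mkQ]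
  have hkerrank : finrank K (LinearMap.ker g) = finrank K W := by
    rw [hker]
    exact (Submodule.comapSubtypeEquivOfLe hWP).finrank_eq
  rw [hrange, hkerrank] at hrank
  exact hrank.symm

end Fibers

section Count

variable {V : Type*} [AddCommGroup V] [Module (ZMod 2) V] [FiniteDimensional (ZMod 2) V]

lemma card_covers (W : Submodule (ZMod 2) V) :
    Nat.card {W' : Submodule (ZMod 2) V //
        W ≤ W' ∧ finrank (ZMod 2) W' = finrank (ZMod 2) W + 1} =
      2 ^ (finrank (ZMod 2) V - finrank (ZMod 2) W) - 1 := by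
  have e : {U : Submodule (ZMod 2) (V ⧸ W) // finrank (ZMod 2) U = 1} ≃
      {W' : Submodule (ZMod 2) V //
        W ≤ W' ∧ finrank (ZMod 2) W' = finrank (ZMod 2) W + 1} := by
    refine ⟨fun U => ⟨U.1.comap W.mkQ, Submodule.le_comap_mkQ W U.1, by
        rw [finrank_comap_mkQ, U.2]; omega⟩,
      fun W' => ⟨W'.1.map W.mkQ, ?_⟩, ?_, ?_⟩
    · have hc : (W'.1.map W.mkQ).comap W.mkQ = W'.1 := by
        rw [Submodule.comap_map_mkQ, sup_eq_right.mpr W'.2.1]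
      have := finrank_comap_mkQ W (W'.1.map W.mkQ)
      rw [hc, W'.2.2] at this
      omega
    · rintro ⟨U, hU⟩
      refine Subtype.ext ?_
      dsimp only
      exact Submodule.map_comap_eq_of_surjective (Submodule.mkQ_surjective W) U
    · rintro ⟨W', hW'⟩
      refine Subtype.ext ?_
      dsimp only
      rw [Submodule.comap_map_mkQ, sup_eq_right.mpr hW'.1]
  rw [← Nat.card_congr e, card_lines (V ⧸ W)]
  have hq : finrank (ZMod 2) (V ⧸ W) =
      finrank (ZMod 2) V - finrank (ZMod 2) W := by
    have := Submodule.finrank_quotient_add_finrank W; omega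
  rw [hq]

lemma card_hyperplanes (W' : Submodule (ZMod 2) V) (m : ℕ)
    (h : finrank (ZMod 2) W' = m + 1) :
    Nat.card {W : Submodule (ZMod 2) V // W ≤ W' ∧ finrank (ZMod 2) W = m} =
      2 ^ (m + 1) - 1 := by
  have e : {U : Submodule (ZMod 2) W' // finrank (ZMod 2) U = m} ≃
      {W : Submodule (ZMod 2) V // W ≤ W' ∧ finrank (ZMod 2) W = m} := by
    refine ⟨fun U => ⟨U.1.map W'.subtype, Submodule.map_subtype_le W' U.1, by
        rw [Submodule.finrank_map_subtype_eq, U.2]⟩,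
      fun W => ⟨W.1.comap W'.subtype, ?_⟩, ?_, ?_⟩
    · have := (Submodule.comapSubtypeEquivOfLe W.2.1).finrank_eq
      rw [this, W.2.2]
    · rintro ⟨U, hU⟩
      refine Subtype.ext ?_
      dsimp only
      rw [Submodule.comap_map_eq_of_injective (Submodule.injective_subtype W') U]
    · rintro ⟨W, hW⟩
      refine Subtype.ext ?_
      dsimp only
      rw [Submodule.map_comap_eq, Submodule.range_subtype, inf_eq_right.mpr hW.1]
  rw [← Nat.card_congr e]
  have h2 : Nat.card {U : Submodule (ZMod 2) W' // finrank (ZMod 2) U = m} =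
      Nat.card {U : Submodule (ZMod 2) W' //
        finrank (ZMod 2) U = finrank (ZMod 2) W' - m} := by
    exact card_subspaces_codim m (by omega)
  rw [h2]
  have h3 : finrank (ZMod 2) W' - m = 1 := by omega
  rw [h3, card_lines W', h]

end Count

lemma nat_card_sigma_const {ι : Type*} [Finite ι] (g : ι → Type*) [∀ i, Finite (g i)]
    (c : ℕ) (h : ∀ i, Nat.card (g i) = c) :
    Nat.card (Σ i, g i) = Nat.card ι * c := by
  classical
  have : Fintype ι := Fintype.ofFinite ι
  have : ∀ i, Fintype (g i) := fun i => Fintype.ofFinite (g i)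
  rw [Nat.card_eq_fintype_card, Nat.card_eq_fintype_card, Fintype.card_sigma]
  have : ∀ i, Fintype.card (g i) = c := fun i => by
    rw [← Nat.card_eq_fintype_card]; exact h i
  simp [this, Finset.sum_const, Finset.card_univ, mul_comm]

section Step

variable {V : Type*} [AddCommGroup V] [Module (ZMod 2) V] [FiniteDimensional (ZMod 2) V]

lemma card_step (m : ℕ) (h : 2 * m + 1 ≤ finrank (ZMod 2) V) :
    Nat.card {W : Submodule (ZMod 2) V // finrank (ZMod 2) W = m} ≤
      Nat.card {W : Submodule (ZMod 2) V // finrank (ZMod 2) W = m + 1} := by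
  classical
  have hfinV : Finite V := Module.finite_of_finite (ZMod 2)
  have hfin : Finite (Submodule (ZMod 2) V) :=
    Finite.of_injective (fun W => (W : Set V)) SetLike.coe_injective
  set n := finrank (ZMod 2) V with hn
  let T := {p : Submodule (ZMod 2) V × Submodule (ZMod 2) V //
    p.1 ≤ p.2 ∧ finrank (ZMod 2) p.1 = m ∧ finrank (ZMod 2) p.2 = m + 1}
  let A := {W : Submodule (ZMod 2) V // finrank (ZMod 2) W = m}
  let B := {W' : Submodule (ZMod 2) V // finrank (ZMod 2) W' = m + 1}
  have e1 : T ≃ Σ W : A, {W' : Submodule (ZMod 2) V //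
      W.1 ≤ W' ∧ finrank (ZMod 2) W' = m + 1} :=
    ⟨fun p => ⟨⟨p.1.1, p.2.2.1⟩, ⟨p.1.2, p.2.1, p.2.2.2⟩⟩,
     fun x => ⟨(x.1.1, x.2.1), x.2.2.1, x.1.2, x.2.2.2⟩,
     fun p => rfl, fun x => rfl⟩
  have e2 : T ≃ Σ W' : B, {W : Submodule (ZMod 2) V //
      W ≤ W'.1 ∧ finrank (ZMod 2) W = m} :=
    ⟨fun p => ⟨⟨p.1.2, p.2.2.2⟩, ⟨p.1.1, p.2.1, p.2.2.1⟩⟩,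
     fun x => ⟨(x.2.1, x.1.1), x.2.2.1, x.2.2.2, x.1.2⟩,
     fun p => rfl, fun x => rfl⟩
  have h1 : Nat.card T = Nat.card A * (2 ^ (n - m) - 1) := by
    rw [Nat.card_congr e1]
    apply nat_card_sigma_const
    intro W
    have hc := card_covers W.1
    rw [W.2] at hc
    exact hc
  have h2 : Nat.card T = Nat.card B * (2 ^ (m + 1) - 1) := by
    rw [Nat.card_congr e2]
    apply nat_card_sigma_const
    intro W'
    exact card_hyperplanes W'.1 m W'.2
  have hle : 2 ^ (m + 1) - 1 ≤ 2 ^ (n - m) - 1 := by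
    have h1' : m + 1 ≤ n - m := by omega
    have := Nat.pow_le_pow_right (by norm_num : 1 ≤ 2) h1'
    omega
  have hpos : 0 < 2 ^ (n - m) - 1 := by
    have h1' : 1 ≤ n - m := by omega
    have := Nat.pow_le_pow_right (by norm_num : 1 ≤ 2) h1'
    omega
  have key : Nat.card A * (2 ^ (n - m) - 1) ≤ Nat.card B * (2 ^ (n - m) - 1) := by
    calc Nat.card A * (2 ^ (n - m) - 1) = Nat.card B * (2 ^ (m + 1) - 1) := by rw [← h1, h2]
    _ ≤ Nat.card B * (2 ^ (n - m) - 1) := Nat.mul_le_mul_left _ hle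
  exact Nat.le_of_mul_le_mul_right key hpos

lemma card_mono (k l : ℕ) (hkl : k ≤ l) (hl : 2 * l ≤ finrank (ZMod 2) V + 1) :
    Nat.card {W : Submodule (ZMod 2) V // finrank (ZMod 2) W = k} ≤
      Nat.card {W : Submodule (ZMod 2) V // finrank (ZMod 2) W = l} := by
  revert hl
  induction l, hkl using Nat.le_induction with
  | base => intro _; exact le_rfl
  | succ l hkl ih =>
    intro hl
    exact le_trans (ih (by omega)) (card_step (V := V) l (by omega))

end Step

/-- for `0 ≤ m ≤ n`, the number of `m`-dimensional GF(2)-subspaces of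
`(ZMod 2)^n` is at most the number of `⌈n/2⌉`-dimensional GF(2)-subspaces. -/
theorem card_dim_m_subspaces_le_card_dim_half (n m : ℕ) (hmn : m ≤ n) :
    Nat.card {W : Submodule (ZMod 2) (Fin n → ZMod 2) //
        Module.finrank (ZMod 2) W = m} ≤
      Nat.card {W : Submodule (ZMod 2) (Fin n → ZMod 2) //
        Module.finrank (ZMod 2) W = (n + 1) / 2} := by
  have hV : finrank (ZMod 2) (Fin n → ZMod 2) = n := Module.finrank_fin_fun (ZMod 2)
  set h := (n + 1) / 2 with hh
  rcases le_or_gt m h with hm | hm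
  · exact card_mono m h hm (by omega)
  · have hmn' : n - m ≤ n := by omega
    have hdual := card_subspaces_codim (K := ZMod 2) (V := Fin n → ZMod 2) (k := n - m) (by omega)
    rw [hV] at hdual
    have hnm : n - (n - m) = m := by omega
    rw [hnm] at hdual
    rw [← hdual]
    exact card_mono (n - m) h (by omega) (by omega)
end

section
/- For every k ≥ 1, the family of unions of neighborhoods across the cut (A(H_k), B(H_k)) of the Hsu graph H_k consists exactly of the initial segments: {N(Y) : Y ⊆ A(H_k)} = { {b_1,…,b_l} : 0 ≤ l ≤ k }. In particular this family has exactly k+1 members, so the boolean-cut value β_{H_k}(A(H_k)) equals log₂(k+1) (the paper's Lemma 2 records this as β_{H_k}(A(H_k)) = log k). -/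
/-- The Hsu graph `H_k`: a bipartite graph with color classes `A(H_k)` (the left copies
`Sum.inl i` for `i : Fin (k+1)`) and `B(H_k)` (the right copies `Sum.inr j`), where
`a_i` is adjacent to `b_j` iff `j < i` (0-indexed; so `N(a_0) = ∅` and
`N(a_i) = {b_0, …, b_{i-1}}`). -/
def hsuGraph (k : ℕ) : SimpleGraph (Fin (k + 1) ⊕ Fin (k + 1)) where
  Adj x y :=
    (∃ i j : Fin (k + 1), x = Sum.inl i ∧ y = Sum.inr j ∧ (j : ℕ) < (i : ℕ)) ∨
    (∃ i j : Fin (k + 1), x = Sum.inr j ∧ y = Sum.inl i ∧ (j : ℕ) < (i : ℕ))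
  symm := by
    refine ⟨?_⟩
    rintro x y (⟨i, j, rfl, rfl, h⟩ | ⟨i, j, rfl, rfl, h⟩)
    · exact Or.inr ⟨i, j, rfl, rfl, h⟩
    · exact Or.inl ⟨i, j, rfl, rfl, h⟩
  loopless := by
    refine ⟨?_⟩
    rintro x (⟨i, j, rfl, h, -⟩ | ⟨i, j, rfl, h, -⟩) <;> simp at h

/-- The color class `A(H_k)` of the Hsu graph, as a finset. -/
def hsuLeft (k : ℕ) : Finset (Fin (k + 1) ⊕ Fin (k + 1)) :=
  Finset.univ.filter (fun x => x.isLeft)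

/-! The neighbourhood of `a_i` is the initial segment `{b_j : j < i}`, so the neighbourhoods of
`A(H_k)` form a chain and `N(Y)` is the neighbourhood of the largest `a_i` in `Y`; the `k + 1`
segments of length `≤ k` are pairwise distinct. Since `A(H_k)` is independent, removing it from
`N(Y)` changes nothing. -/

namespace SimpleGraph

variable {V : Type*} (G : SimpleGraph V)

theorem biUnion_neighborSet_diff_of_isIndepSet {A Y : Set V} (hA : G.IsIndepSet A)
    (hY : Y ⊆ A) : (⋃ y ∈ Y, G.neighborSet y) \ A = ⋃ y ∈ Y, G.neighborSet y := by
  refine sdiff_eq_left.mpr (Set.disjoint_left.mpr ?_)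
  simp only [Set.mem_iUnion, mem_neighborSet]
  rintro z ⟨y, hy, hadj⟩ hz
  exact hA (hY hy) hz hadj.ne hadj

end SimpleGraph

section HsuGraph

variable {k : ℕ}

def hsuSegment (k l : ℕ) : Set (Fin (k + 1) ⊕ Fin (k + 1)) :=
  {z | ∃ j : Fin (k + 1), z = Sum.inr j ∧ (j : ℕ) < l}

theorem hsuSegment_strictMonoOn : StrictMonoOn (hsuSegment k) (Set.Iic k) := by
  intro l _ l' hl' hll'
  refine Set.ssubset_iff_subset_ne.mpr ⟨?_, fun heq => ?_⟩
  · rintro z ⟨j, rfl, hj⟩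
    exact ⟨j, rfl, hj.trans hll'⟩
  · have hmem : Sum.inr ⟨l, Nat.lt_succ_of_lt (hll'.trans_le hl')⟩ ∈ hsuSegment k l' := ⟨_, rfl, hll'⟩
    obtain ⟨j, hj, hjl⟩ := heq ▸ hmem
    cases Sum.inr_injective hj
    exact lt_irrefl _ hjl

theorem biUnion_hsuSegment {ι : Type*} (I : Finset ι) (f : ι → ℕ) :
    ⋃ i ∈ I, hsuSegment k (f i) = hsuSegment k (I.sup f) := by
  ext z
  simp only [hsuSegment, Set.mem_iUnion, Set.mem_ofPred_eq, Finset.lt_sup_iff]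
  grind

theorem hsuGraph_neighborSet_inl (i : Fin (k + 1)) :
    (hsuGraph k).neighborSet (Sum.inl i) = hsuSegment k i := by
  ext z
  simp [hsuGraph, hsuSegment]

theorem mem_hsuLeft {x : Fin (k + 1) ⊕ Fin (k + 1)} : x ∈ hsuLeft k ↔ x.isLeft := by
  simp [hsuLeft]

theorem hsuGraph_isIndepSet_hsuLeft : (hsuGraph k).IsIndepSet (hsuLeft k) := by
  rintro x hx y hy - (⟨i, j, rfl, rfl, -⟩ | ⟨i, j, rfl, rfl, -⟩) <;>
    simp [mem_hsuLeft] at hx hy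

theorem exists_biUnion_neighborSet_eq_hsuSegment {Y : Set (Fin (k + 1) ⊕ Fin (k + 1))}
    (hY : Y ⊆ hsuLeft k) : ∃ l ≤ k, ⋃ y ∈ Y, (hsuGraph k).neighborSet y = hsuSegment k l := by
  classical
  let I : Finset (Fin (k + 1)) := Finset.univ.filter fun i => Sum.inl i ∈ Y
  have hY' : Y = Sum.inl '' I := by
    ext y
    rcases y with i | j
    · simp [I]
    · simpa [mem_hsuLeft] using mt (@hY (Sum.inr j))
  refine ⟨I.sup (↑), Finset.sup_le fun i _ => Nat.le_of_lt_succ i.isLt, ?_⟩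
  rw [← biUnion_hsuSegment, hY', Set.biUnion_image]
  simp only [hsuGraph_neighborSet_inl, Finset.mem_coe]

theorem hsuGraph_unions_eq_image_hsuSegment :
    {S | ∃ Y : Set (Fin (k + 1) ⊕ Fin (k + 1)), Y ⊆ ↑(hsuLeft k) ∧
        (⋃ y ∈ Y, (hsuGraph k).neighborSet y) = S} = hsuSegment k '' Set.Iic k := by
  ext S
  constructor
  · rintro ⟨Y, hY, rfl⟩
    obtain ⟨l, hl, hYl⟩ := exists_biUnion_neighborSet_eq_hsuSegment hY
    exact ⟨l, hl, hYl.symm⟩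
  · rintro ⟨l, hl, rfl⟩
    let i : Fin (k + 1) := ⟨l, Nat.lt_succ_of_le hl⟩
    refine ⟨{Sum.inl i}, by simp [mem_hsuLeft], ?_⟩
    simpa using hsuGraph_neighborSet_inl i

end HsuGraph

theorem hsuGraph_unions_eq_initial_segments_general (k : ℕ) :
    ({S : Set (Fin (k + 1) ⊕ Fin (k + 1)) |
        ∃ Y : Set (Fin (k + 1) ⊕ Fin (k + 1)), Y ⊆ ↑(hsuLeft k) ∧
          (⋃ y ∈ Y, (hsuGraph k).neighborSet y) = S} =
      {S : Set (Fin (k + 1) ⊕ Fin (k + 1)) |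
        ∃ l : ℕ, l ≤ k ∧
          S = {z | ∃ j : Fin (k + 1), z = Sum.inr j ∧ (j : ℕ) < l}}) ∧
    unionCount (hsuGraph k) (hsuLeft k) = k + 1 := by
  refine ⟨?_, ?_⟩
  · rw [hsuGraph_unions_eq_image_hsuSegment]
    ext S
    simp only [Set.mem_image, Set.mem_Iic, Set.mem_ofPred_eq, eq_comm (a := S)]
    rfl
  · have hcut : {S | ∃ Y : Set (Fin (k + 1) ⊕ Fin (k + 1)), Y ⊆ ↑(hsuLeft k) ∧
        (⋃ y ∈ Y, (hsuGraph k).neighborSet y) \ ↑(hsuLeft k) = S} = hsuSegment k '' Set.Iic k := by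
      rw [← hsuGraph_unions_eq_image_hsuSegment]
      refine Set.ext fun S => exists_congr fun Y => and_congr_right fun hY => ?_
      rw [(hsuGraph k).biUnion_neighborSet_diff_of_isIndepSet hsuGraph_isIndepSet_hsuLeft hY]
    rw [unionCount, hcut, hsuSegment_strictMonoOn.injOn.ncard_image, Set.ncard_Iic_nat]

/-- for `k ≥ 1`, the family of unions of neighborhoods across the cut
`(A(H_k), B(H_k))` of the Hsu graph consists exactly of the initial segments
`{b_0, …, b_{l-1}}` for `0 ≤ l ≤ k`; in particular it has exactly `k + 1` members,
so `β_{H_k}(A(H_k)) = log₂ (k+1)`. -/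
theorem hsuGraph_unions_eq_initial_segments (k : ℕ) (hk : 1 ≤ k) :
    ({S : Set (Fin (k + 1) ⊕ Fin (k + 1)) |
        ∃ Y : Set (Fin (k + 1) ⊕ Fin (k + 1)), Y ⊆ ↑(hsuLeft k) ∧
          (⋃ y ∈ Y, (hsuGraph k).neighborSet y) = S} =
      {S : Set (Fin (k + 1) ⊕ Fin (k + 1)) |
        ∃ l : ℕ, l ≤ k ∧
          S = {z | ∃ j : Fin (k + 1), z = Sum.inr j ∧ (j : ℕ) < l}}) ∧
    unionCount (hsuGraph k) (hsuLeft k) = k + 1 :=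
  hsuGraph_unions_eq_initial_segments_general k
end

section
/- Let k ≥ 1 and let X be a nonempty family of subsets of {1,…,k} that is closed under symmetric difference (S, T ∈ X implies S Δ T ∈ X). If S ⊆ {1,…,k} satisfies {W ⊆ {1,…,k} : |S ∩ W| is odd} ⊆ ⋃_{T ∈ X} {W ⊆ {1,…,k} : |T ∩ W| is odd}, then S ∈ X. (In the language of R_k: if X ⊆ A(R_k) is closed under a_S, a_T ↦ a_{SΔT} and N(a_S) ⊆ N(X), then a_S ∈ X.) -/
/-!
Identify a subset `S` of `ι` with its indicator vector in `𝔽₂^ι`. Then `|S ∩ W|` is odd exactly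
when the dot product of the indicator vectors of `S` and `W` is nonzero, and a family closed
under symmetric difference is a subspace. If `S` were not in that subspace, some linear
functional, i.e. the dot product with the indicator vector of some `W`, would vanish on `X` but
not at `S`: this `W` is a neighbour of `a_S` adjacent to no `a_T` with `T ∈ X`.
-/

open Finset

variable {ι : Type*} [DecidableEq ι]

theorem Submodule.exists_dotProduct_ne_zero_of_notMem {K : Type*} [Field K] [Fintype ι]
    {V : Submodule K (ι → K)} {v : ι → K} (hv : v ∉ V) : ∃ w, v ⬝ᵥ w ≠ 0 ∧ ∀ u ∈ V, u ⬝ᵥ w = 0 := by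
  obtain ⟨f, hfv, hVf⟩ := V.exists_le_ker_of_notMem hv
  have hf : ∀ u, f u = u ⬝ᵥ (dotProductEquiv K ι).symm f := fun u => by
    conv_lhs => rw [← (dotProductEquiv K ι).apply_symm_apply f]
    exact dotProduct_comm _ _
  exact ⟨(dotProductEquiv K ι).symm f, hf v ▸ hfv, fun u hu => hf u ▸ hVf hu⟩

namespace Finset

def indicatorVec (S : Finset ι) : ι → ZMod 2 := fun i => if i ∈ S then 1 else 0

theorem indicatorVec_injective : Function.Injective (indicatorVec (ι := ι)) := by
  intro S T h
  ext i
  have := congrFun h i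
  by_cases hS : i ∈ S <;> by_cases hT : i ∈ T <;> simp_all [indicatorVec]

theorem indicatorVec_surjective [Fintype ι] : Function.Surjective (indicatorVec (ι := ι)) := by
  intro v
  refine ⟨univ.filter (v · = 1), funext fun i => ?_⟩
  rcases (by decide : ∀ x : ZMod 2, x = 0 ∨ x = 1) (v i) with h | h <;> simp [indicatorVec, h]

theorem indicatorVec_symmDiff (S T : Finset ι) :
    indicatorVec (symmDiff S T) = indicatorVec S + indicatorVec T := by
  funext i
  by_cases hS : i ∈ S <;> by_cases hT : i ∈ T <;>
    simp [indicatorVec, mem_symmDiff, hS, hT, CharTwo.add_self_eq_zero]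

theorem indicatorVec_dotProduct [Fintype ι] (S W : Finset ι) :
    indicatorVec S ⬝ᵥ indicatorVec W = (#(S ∩ W) : ZMod 2) := by
  simp only [dotProduct, indicatorVec, mul_ite, mul_one, mul_zero, ← ite_and,
    and_comm (a := _ ∈ W), ← mem_inter, sum_ite_mem, univ_inter, sum_const, nsmul_eq_mul]

theorem indicatorVec_dotProduct_eq_zero_iff [Fintype ι] (S W : Finset ι) :
    indicatorVec S ⬝ᵥ indicatorVec W = 0 ↔ Even #(S ∩ W) := by
  rw [indicatorVec_dotProduct, ZMod.natCast_eq_zero_iff_even]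

def indicatorSubmodule (X : Set (Finset ι)) (hempty : ∅ ∈ X)
    (hclosed : ∀ S ∈ X, ∀ T ∈ X, symmDiff S T ∈ X) : Submodule (ZMod 2) (ι → ZMod 2) :=
  AddSubgroup.toZModSubmodule 2
    { carrier := indicatorVec '' X
      add_mem' := by
        rintro _ _ ⟨S, hS, rfl⟩ ⟨T, hT, rfl⟩
        exact ⟨symmDiff S T, hclosed S hS T hT, indicatorVec_symmDiff S T⟩
      zero_mem' := ⟨∅, hempty, funext fun _ => if_neg (notMem_empty _)⟩
      neg_mem' := by
        rintro _ ⟨S, hS, rfl⟩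
        exact ⟨S, hS, (ZModModule.neg_eq_self _).symm⟩ }

theorem mem_of_forall_odd_card_inter [Fintype ι] (X : Set (Finset ι)) (hne : X.Nonempty)
    (hclosed : ∀ S ∈ X, ∀ T ∈ X, symmDiff S T ∈ X) (S : Finset ι)
    (hodd : ∀ W, Odd #(S ∩ W) → ∃ T ∈ X, Odd #(T ∩ W)) : S ∈ X := by
  obtain ⟨T₀, hT₀⟩ := hne
  have hempty : ∅ ∈ X := by simpa using hclosed T₀ hT₀ T₀ hT₀
  by_contra hS
  have hSV : indicatorVec S ∉ indicatorSubmodule X hempty hclosed := by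
    rintro ⟨T, hT, hTS⟩
    exact hS (indicatorVec_injective hTS ▸ hT)
  obtain ⟨w, hSw, hVw⟩ := Submodule.exists_dotProduct_ne_zero_of_notMem hSV
  obtain ⟨W, rfl⟩ := indicatorVec_surjective w
  rw [Ne, indicatorVec_dotProduct_eq_zero_iff, Nat.not_even_iff_odd] at hSw
  obtain ⟨T, hT, hTW⟩ := hodd W hSw
  have hTW' := (indicatorVec_dotProduct_eq_zero_iff T W).1 (hVw _ ⟨T, hT, rfl⟩)
  exact Nat.not_even_iff_odd.2 hTW hTW'

end Finset

theorem mem_of_neighborhood_subset_general (k : ℕ)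
    (X : Set (Finset (Fin k))) (hne : X.Nonempty)
    (hclosed : ∀ S ∈ X, ∀ T ∈ X, symmDiff S T ∈ X)
    (S : Finset (Fin k))
    (hsub : {W : Finset (Fin k) | Odd (S ∩ W).card} ⊆
      ⋃ T ∈ X, {W : Finset (Fin k) | Odd (T ∩ W).card}) :
    S ∈ X :=
  mem_of_forall_odd_card_inter X hne hclosed S fun W hW => by simpa using hsub hW

/-- let `X` be a nonempty family of subsets of `{1,…,k}` closed under
symmetric difference. If `S` satisfies `N(a_S) ⊆ N(X)` in `R_k`, i.e.
`{W : |S ∩ W| odd} ⊆ ⋃_{T ∈ X} {W : |T ∩ W| odd}`, then `S ∈ X`. -/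
theorem mem_of_neighborhood_subset (k : ℕ) (hk : 1 ≤ k)
    (X : Set (Finset (Fin k))) (hne : X.Nonempty)
    (hclosed : ∀ S ∈ X, ∀ T ∈ X, symmDiff S T ∈ X)
    (S : Finset (Fin k))
    (hsub : {W : Finset (Fin k) | Odd (S ∩ W).card} ⊆
      ⋃ T ∈ X, {W : Finset (Fin k) | Odd (T ∩ W).card}) :
    S ∈ X :=
  mem_of_neighborhood_subset_general k X hne hclosed S hsub
end

section
/- For every k ≥ 1, the number of distinct unions of neighborhoods across the cut (A(R_k), B(R_k)) of R_k equals the number of GF(2)-linear subspaces of the vector space (ZMod 2)^k. That is, the cardinality of { ⋃_{S ∈ 𝒴} {T ⊆ {1,…,k} : |S ∩ T| is odd} : 𝒴 a family of subsets of {1,…,k} } equals the number of ZMod 2-submodules of Fin k → ZMod 2. (This is the paper's Lemma 3: β_{R_k}(A(R_k)) = log₂ nss_{R_k}(A(R_k)).) -/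
/-!
Identify `T ⊆ Fin k` with its indicator vector in `(ZMod 2)^k`. Then `|S ∩ T|` is odd exactly
when the dot product of the indicators is nonzero, so the complement of `⋃_{S ∈ 𝒴} N(a_S)` is the
orthogonal complement of the span of `𝒴`. The dot product is nondegenerate, so `W ↦ W^⊥` is an
involution on subspaces: every subspace arises this way, and distinct subspaces give distinct
unions.
-/

open Matrix

namespace LinearMap.BilinForm

variable {R M : Type*} [CommRing R] [AddCommGroup M] [Module R M]

lemma orthogonal_span (B : LinearMap.BilinForm R M) (Y : Set M) :
    (B.orthogonal (Submodule.span R Y) : Set M) = {v | ∀ y ∈ Y, B y v = 0} := by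
  ext v
  refine ⟨fun hv y hy => hv y (Submodule.subset_span hy), fun hv => ?_⟩
  show ∀ y ∈ Submodule.span R Y, B y v = 0
  intro y hy
  induction hy using Submodule.span_induction with
  | mem y hy => exact hv y hy
  | zero => simp
  | add x y _ _ hx hy => simp [hx, hy]
  | smul a x _ hx => simp [hx]

variable {K V : Type*} [Field K] [AddCommGroup V] [Module K V] [FiniteDimensional K V]

lemma range_setOf_forall_eq_zero {B : LinearMap.BilinForm K V} (hB : B.Nondegenerate)
    (hB₀ : B.IsRefl) :
    Set.range (fun Y : Set V => {v | ∀ y ∈ Y, B y v = 0}) =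
      Set.range ((↑) : Submodule K V → Set V) := by
  ext s
  constructor
  · rintro ⟨Y, rfl⟩
    exact ⟨_, B.orthogonal_span Y⟩
  · rintro ⟨W, rfl⟩
    refine ⟨B.orthogonal W, ?_⟩
    dsimp only
    rw [← B.orthogonal_span, Submodule.span_eq, orthogonal_orthogonal hB hB₀]

end LinearMap.BilinForm

section DotProduct

variable {K ι : Type*} [Field K] [Fintype ι]

lemma dotProductBilin_isRefl : (dotProductBilin K K : LinearMap.BilinForm K (ι → K)).IsRefl :=
  fun x y h => by simpa [dotProduct_comm] using h

lemma dotProductBilin_nondegenerate :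
    (dotProductBilin K K : LinearMap.BilinForm K (ι → K)).Nondegenerate :=
  dotProductBilin_isRefl.nondegenerate_iff_separatingLeft.2 fun x hx =>
    dotProduct_eq_zero x fun y => by simpa using hx y

end DotProduct

namespace Finset

variable (ι : Type*) [Fintype ι] [DecidableEq ι]

def equivZModTwo : Finset ι ≃ (ι → ZMod 2) where
  toFun S i := if i ∈ S then 1 else 0
  invFun x := {i | x i = 1}
  left_inv S := by ext i; by_cases h : i ∈ S <;> simp [h]
  right_inv x := funext fun i => by
    rcases (by decide : ∀ a : ZMod 2, a = 0 ∨ a = 1) (x i) with h | h <;> simp [h]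

variable {ι}

lemma equivZModTwo_dotProduct (S T : Finset ι) :
    equivZModTwo ι S ⬝ᵥ equivZModTwo ι T = #(S ∩ T) := by
  simp [equivZModTwo, dotProduct, Finset.inter_comm]

lemma odd_card_inter_iff (S T : Finset ι) :
    Odd #(S ∩ T) ↔ equivZModTwo ι S ⬝ᵥ equivZModTwo ι T ≠ 0 := by
  rw [equivZModTwo_dotProduct, Ne, ZMod.natCast_eq_zero_iff_even, Nat.not_even_iff_odd]

lemma iUnion_odd_card_inter_eq_compl (𝒴 : Set (Finset ι)) :
    ⋃ S ∈ 𝒴, {T | Odd #(S ∩ T)} = (equivZModTwo ι ⁻¹'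
      {v | ∀ y ∈ equivZModTwo ι '' 𝒴, dotProductBilin (ZMod 2) (ZMod 2) y v = 0})ᶜ := by
  ext T
  simp only [Set.mem_iUnion, Set.mem_ofPred_eq, Set.mem_compl_iff, Set.mem_preimage,
    Set.forall_mem_image, odd_card_inter_iff, dotProductBilin_apply_apply, exists_prop, not_forall]

lemma setOf_iUnion_odd_card_inter_eq_range :
    {U : Set (Finset ι) | ∃ 𝒴 : Set (Finset ι), U = ⋃ S ∈ 𝒴, {T | Odd #(S ∩ T)}} =
      Set.range fun W : Submodule (ZMod 2) (ι → ZMod 2) => (equivZModTwo ι ⁻¹' W)ᶜ := by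
  have hrange := LinearMap.BilinForm.range_setOf_forall_eq_zero
    (dotProductBilin_nondegenerate (K := ZMod 2) (ι := ι)) dotProductBilin_isRefl
  ext U
  constructor
  · rintro ⟨𝒴, rfl⟩
    obtain ⟨W, hW⟩ := hrange ▸ Set.mem_range_self (equivZModTwo ι '' 𝒴)
    exact ⟨W, by dsimp only; rw [iUnion_odd_card_inter_eq_compl, hW]⟩
  · rintro ⟨W, rfl⟩
    obtain ⟨Y, hY⟩ := hrange.symm ▸ Set.mem_range_self W
    exact ⟨equivZModTwo ι ⁻¹' Y, by
      dsimp only at hY ⊢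
      rw [iUnion_odd_card_inter_eq_compl, Equiv.image_preimage, hY]⟩

end Finset

theorem rk_unions_card_eq_card_submodules_general (k : ℕ) :
    Set.ncard {U : Set (Finset (Fin k)) |
        ∃ 𝒴 : Set (Finset (Fin k)),
          U = ⋃ S ∈ 𝒴, {T : Finset (Fin k) | Odd (S ∩ T).card}} =
      Nat.card (Submodule (ZMod 2) (Fin k → ZMod 2)) := by
  rw [Finset.setOf_iUnion_odd_card_inter_eq_range, Set.ncard_range_of_injective]
  exact compl_injective.comp <|
    (Set.preimage_injective.2 (Finset.equivZModTwo _).surjective).comp SetLike.coe_injective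

/-- for `k ≥ 1`, the number of distinct unions of neighborhoods across
the cut `(A(R_k), B(R_k))` of `R_k` equals the number of GF(2)-linear subspaces of
`(ZMod 2)^k`: the cardinality of
`{ ⋃_{S ∈ 𝒴} {T : |S ∩ T| odd} : 𝒴 a family of subsets of {1,…,k} }` equals the
number of `ZMod 2`-submodules of `Fin k → ZMod 2`. -/
theorem rk_unions_card_eq_card_submodules (k : ℕ) (hk : 1 ≤ k) :
    Set.ncard {U : Set (Finset (Fin k)) |
        ∃ 𝒴 : Set (Finset (Fin k)),
          U = ⋃ S ∈ 𝒴, {T : Finset (Fin k) | Odd (S ∩ T).card}} =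
      Nat.card (Submodule (ZMod 2) (Fin k → ZMod 2)) :=
  rk_unions_card_eq_card_submodules_general k
end

section
/- Let p ≥ 2 and q ≥ 2, and let {A, B} be a balanced cut of the Hsu-grid HG_{p,q} (i.e., both |A| and |B| are at least pq/3). Then either the cut-rank of A over GF(2) is at least ⌊p/4⌋, or there is an induced matching of size ⌊q/6⌋ across the cut {A,B}: distinct vertices x_1,…,x_m ∈ A and y_1,…,y_m ∈ B with m = ⌊q/6⌋ such that x_i is adjacent to y_j in HG_{p,q} if and only if i = j. -/
/-- The Hsu-grid `HG_{p,q}` (0-indexed): vertex set `Fin p × Fin q` (`v_{i,j}` has row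
`i` and column `j`), with edges `v_{i,j} ~ v_{i+1,j}` (consecutive rows, same column)
and `v_{i,j} ~ v_{i',j+1}` for `i ≤ i'` (Hsu edges between consecutive columns). -/
def hsuGrid (p q : ℕ) : SimpleGraph (Fin p × Fin q) where
  Adj x y :=
    (x.2 = y.2 ∧ ((x.1 : ℕ) + 1 = (y.1 : ℕ) ∨ (y.1 : ℕ) + 1 = (x.1 : ℕ))) ∨
    ((x.2 : ℕ) + 1 = (y.2 : ℕ) ∧ (x.1 : ℕ) ≤ (y.1 : ℕ)) ∨
    ((y.2 : ℕ) + 1 = (x.2 : ℕ) ∧ (y.1 : ℕ) ≤ (x.1 : ℕ))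
  symm := by
    constructor
    rintro x y (⟨h1, h2⟩ | ⟨h1, h2⟩ | ⟨h1, h2⟩)
    · exact Or.inl ⟨h1.symm, h2.symm⟩
    · exact Or.inr (Or.inr ⟨h1, h2⟩)
    · exact Or.inr (Or.inl ⟨h1, h2⟩)
  loopless := by
    constructor
    rintro x (⟨-, h⟩ | ⟨h, -⟩ | ⟨h, -⟩) <;> omega

/-!
Call a column mixed if it meets both `A` and its complement `B`. A mixed column contains a
vertical edge across the cut, and edges of `HG_{p,q}` only join equal or consecutive columns, so
such edges taken from every other mixed column form an induced matching; this gives `⌊q/6⌋` of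
them as soon as `q/3` columns are mixed.

Otherwise balance forces a column inside `A` and a column inside `B`; as the cut-rank is symmetric
in `A` and `B`, the first may be taken left of the second. Walking along row `i` from one to the
other gives a crossing edge `v_{i,s_i} v_{i,s_i+1}`. Ordered by `s_i` and then by decreasing `i`,
these `p` edges span a triangular submatrix of the cut matrix with unit diagonal, so the cut-rank
is at least `p`.
-/

open Finset Function

theorem Matrix.card_le_rank_of_triangular_submatrix {K m n ι α : Type*} [Field K] [Fintype n]
    [Fintype ι] [LinearOrder α] (M : Matrix m n K) (r : ι → m) (c : ι → n) (w : ι → α)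
    (hw : Injective w) (hdiag : ∀ i, M (r i) (c i) ≠ 0)
    (htri : ∀ i j, M (r i) (c j) ≠ 0 → w j ≤ w i) :
    Fintype.card ι ≤ M.rank := by
  classical
  let _ : LinearOrder ι := LinearOrder.lift' w hw
  have hlower : (M.submatrix r c).IsLowerTriangular := fun i j hij => by
    by_contra h
    exact (htri i j h).not_gt (show i < j from hij)
  have hdet : IsUnit (M.submatrix r c).det := by
    rw [det_of_isLowerTriangular _ hlower]
    exact (prod_ne_zero_iff.2 fun i _ => hdiag i).isUnit
  calc Fintype.card ι = (M.submatrix r c).rank :=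
        (rank_of_isUnit _ ((isUnit_iff_isUnit_det _).2 hdet)).symm
    _ ≤ M.rank := rank_submatrix_le M r c

section CutRank

variable {V : Type*} [Fintype V] [DecidableEq V] (G : SimpleGraph V) (A : Finset V)

theorem cutRank_compl : cutRank G Aᶜ = cutRank G A := by
  have hmatrix : cutMatrix G Aᶜ = (cutMatrix G A).transpose.submatrix (Equiv.refl _)
      (Equiv.subtypeEquivRight fun x => by rw [compl_compl]) := by
    ext x y
    simp only [cutMatrix, Matrix.of_apply, Matrix.transpose_apply, Matrix.submatrix_apply,
      Equiv.subtypeEquivRight_apply, Equiv.refl_apply]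
    congr 1
    exact propext (G.adj_comm _ _)
  rw [cutRank, hmatrix, Matrix.rank_submatrix, Matrix.rank_transpose, cutRank]

theorem card_le_cutRank {ι α : Type*} [Fintype ι] [LinearOrder α] (r c : ι → V) (w : ι → α)
    (hw : Injective w) (hr : ∀ i, r i ∈ A) (hc : ∀ i, c i ∉ A)
    (hdiag : ∀ i, G.Adj (r i) (c i)) (htri : ∀ i j, G.Adj (r i) (c j) → w j ≤ w i) :
    Fintype.card ι ≤ cutRank G A :=
  (cutMatrix G A).card_le_rank_of_triangular_submatrix (fun i => ⟨r i, hr i⟩)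
    (fun i => ⟨c i, mem_compl.2 (hc i)⟩) w hw (fun i => by simp [cutMatrix, hdiag])
    (fun i j h => htri i j (by by_contra h'; simp [cutMatrix, h'] at h))

end CutRank

theorem Fin.exists_consecutive_flip {n : ℕ} {P : Fin n → Prop} {a b : Fin n} (hab : a ≤ b)
    (ha : P a) (hb : ¬P b) : ∃ i j : Fin n, (j : ℕ) = i + 1 ∧ P i ∧ ¬P j := by
  by_contra! h
  have hP : ∀ k (hk : (a : ℕ) + k < n), P ⟨a + k, hk⟩ := by
    intro k
    induction k with
    | zero => exact fun _ => ha
    | succ k ih => exact fun hk => h ⟨a + k, by omega⟩ _ rfl (ih (by omega))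
  have hb' : b = ⟨a + (b - a), by omega⟩ := Fin.ext (Nat.add_sub_of_le hab).symm
  exact hb (hb' ▸ hP _ _)

theorem Finset.exists_gapped_of_two_mul_le_card {n k : ℕ} (T : Finset (Fin n))
    (hk : 2 * k ≤ #T) :
    ∃ f : Fin k → Fin n, (∀ i, f i ∈ T) ∧ ∀ i j, i < j → (f i : ℕ) + 2 ≤ f j := by
  let e := T.orderEmbOfFin rfl
  refine ⟨fun i => e ⟨2 * i, by omega⟩, fun i => T.orderEmbOfFin_mem rfl _, fun i j hij => ?_⟩
  have h₁ : e ⟨2 * i, by omega⟩ < e ⟨2 * i + 1, by omega⟩ :=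
    e.strictMono (Fin.mk_lt_mk.2 (by omega))
  have h₂ : e ⟨2 * i + 1, by omega⟩ < e ⟨2 * j, by omega⟩ :=
    e.strictMono (Fin.mk_lt_mk.2 (by rw [Fin.lt_def] at hij; omega))
  rw [Fin.lt_def] at h₁ h₂
  exact Nat.lt_of_le_of_lt h₁ h₂

section HsuGrid

variable {p q : ℕ}

theorem hsuGrid_col_le_of_adj {x y : Fin p × Fin q} (h : (hsuGrid p q).Adj x y) :
    (x.2 : ℕ) ≤ y.2 + 1 := by
  rcases h with ⟨h, -⟩ | ⟨h, -⟩ | ⟨h, -⟩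
  · rw [h]; omega
  · omega
  · omega

def mixedColumns (A : Finset (Fin p × Fin q)) : Finset (Fin q) :=
  {j | (∃ i, (i, j) ∈ A) ∧ ∃ i, (i, j) ∉ A}

theorem mixedColumns_compl (A : Finset (Fin p × Fin q)) : mixedColumns Aᶜ = mixedColumns A := by
  ext j
  simp only [mixedColumns, mem_filter, mem_univ, true_and, mem_compl, not_not]
  exact And.comm

theorem exists_adj_of_mem_mixedColumns {A : Finset (Fin p × Fin q)} {j : Fin q}
    (hj : j ∈ mixedColumns A) :
    ∃ x ∈ A, ∃ y ∉ A, x.2 = j ∧ y.2 = j ∧ (hsuGrid p q).Adj x y := by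
  obtain ⟨⟨u, hu⟩, ⟨v, hv⟩⟩ := (mem_filter.1 hj).2
  rcases le_total u v with huv | hvu
  · obtain ⟨a, b, hab, ha, hb⟩ := Fin.exists_consecutive_flip (P := fun i => (i, j) ∈ A) huv hu hv
    exact ⟨(a, j), ha, (b, j), hb, rfl, rfl, Or.inl ⟨rfl, Or.inl hab.symm⟩⟩
  · obtain ⟨a, b, hab, ha, hb⟩ :=
      Fin.exists_consecutive_flip (P := fun i => (i, j) ∉ A) hvu hv (not_not.2 hu)
    exact ⟨(b, j), not_not.1 hb, (a, j), ha, rfl, rfl, Or.inl ⟨rfl, Or.inr hab.symm⟩⟩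

theorem exists_inducedMatching_of_mixedColumns (A : Finset (Fin p × Fin q)) {k : ℕ}
    (hk : 2 * k ≤ #(mixedColumns A)) :
    ∃ x y : Fin k → Fin p × Fin q, Injective x ∧ Injective y ∧
      (∀ i, x i ∈ A) ∧ (∀ i, y i ∉ A) ∧ ∀ i j, (hsuGrid p q).Adj (x i) (y j) ↔ i = j := by
  obtain ⟨f, hfT, hgap⟩ := (mixedColumns A).exists_gapped_of_two_mul_le_card hk
  choose x hxA y hyA hx hy hadj using fun i => exists_adj_of_mem_mixedColumns (hfT i)
  have hf : ∀ i j, (f i : ℕ) ≤ f j + 1 → (f j : ℕ) ≤ f i + 1 → i = j := fun i j h h' => by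
    by_contra hne
    rcases lt_or_gt_of_ne hne with hij | hji
    · have := hgap i j hij; omega
    · have := hgap j i hji; omega
  have hmatch : ∀ i j, (hsuGrid p q).Adj (x i) (y j) → i = j := fun i j h =>
    hf i j (hx i ▸ hy j ▸ hsuGrid_col_le_of_adj h) (hx i ▸ hy j ▸ hsuGrid_col_le_of_adj h.symm)
  refine ⟨x, y, fun i j h => ?_, fun i j h => ?_, hxA, hyA, fun i j => ⟨hmatch i j, ?_⟩⟩
  · have hcol := congrArg (fun v => (v.2 : ℕ)) h
    simp only [hx] at hcol
    exact hf i j (by omega) (by omega)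
  · have hcol := congrArg (fun v => (v.2 : ℕ)) h
    simp only [hy] at hcol
    exact hf i j (by omega) (by omega)
  · rintro rfl
    exact hadj i

theorem exists_full_column (A : Finset (Fin p × Fin q)) (hp : 0 < p)
    (hA : p * q ≤ 3 * #A) (hmixed : 3 * #(mixedColumns A) < q) :
    ∃ j, ∀ i, (i, j) ∈ A := by
  by_contra! h
  have hmaps : ∀ x ∈ A, x.2 ∈ mixedColumns A :=
    fun x hx => mem_filter.2 ⟨mem_univ _, ⟨x.1, hx⟩, h x.2⟩
  have hfiber : ∀ j ∈ mixedColumns A, #{x ∈ A | x.2 = j} ≤ p := fun j _ => by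
    calc #{x ∈ A | x.2 = j} ≤ #(univ ×ˢ {j}) :=
          card_le_card fun x hx => mem_product.2 ⟨mem_univ _, mem_singleton.2 (mem_filter.1 hx).2⟩
      _ = p := by simp
  have := card_le_mul_card_image_of_maps_to hmaps p hfiber
  nlinarith

theorem le_cutRank_of_full_columns {A : Finset (Fin p × Fin q)} {jA jB : Fin q} (hj : jA < jB)
    (hA : ∀ i, (i, jA) ∈ A) (hB : ∀ i, (i, jB) ∉ A) : p ≤ cutRank (hsuGrid p q) A := by
  choose s t hst hs ht using fun i =>
    Fin.exists_consecutive_flip (P := fun j => (i, j) ∈ A) hj.le (hA i) (hB i)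
  have := card_le_cutRank (hsuGrid p q) A (fun i => (i, s i)) (fun i => (i, t i))
    (fun i => toLex (s i, OrderDual.toDual i)) (fun i j h => congrArg Prod.snd (toLex.injective h))
    hs ht (fun i => Or.inr (Or.inl ⟨(hst i).symm, le_rfl⟩)) fun i j h => by
      have := hst i
      have := hst j
      rcases h with ⟨h, -⟩ | ⟨h, hij⟩ | ⟨h, -⟩ <;>
        simp only [Prod.Lex.toLex_le_toLex, OrderDual.toDual_le_toDual, Fin.lt_def, Fin.le_def,
          Fin.ext_iff] at * <;> omega
  simpa using this

end HsuGrid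

theorem hsuGrid_balanced_cut_general (p q : ℕ) (hp : 2 ≤ p)
    (A : Finset (Fin p × Fin q))
    (hbal₁ : p * q ≤ 3 * A.card) (hbal₂ : 3 * A.card ≤ 2 * (p * q)) :
    p / 4 ≤ cutRank (hsuGrid p q) A ∨
    ∃ x y : Fin (q / 6) → Fin p × Fin q,
      Function.Injective x ∧ Function.Injective y ∧
      (∀ i, x i ∈ A) ∧ (∀ i, y i ∉ A) ∧
      (∀ i j, (hsuGrid p q).Adj (x i) (y j) ↔ i = j) := by
  by_cases hmixed : q ≤ 3 * #(mixedColumns A)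
  · exact .inr (exists_inducedMatching_of_mixedColumns A (by omega))
  have hcard : #A ≤ p * q := by simpa using A.card_le_univ
  obtain ⟨jA, hjA⟩ := exists_full_column A (by omega) hbal₁ (by omega)
  obtain ⟨jB, hjB⟩ := exists_full_column Aᶜ (by omega)
    (by rw [card_compl, Fintype.card_prod, Fintype.card_fin, Fintype.card_fin]; omega)
    (by rw [mixedColumns_compl]; omega)
  refine .inl ((Nat.div_le_self p 4).trans ?_)
  rcases lt_trichotomy jA jB with h | rfl | h
  · exact le_cutRank_of_full_columns h hjA fun i => mem_compl.1 (hjB i)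
  · exact (mem_compl.1 (hjB _) (hjA ⟨0, by omega⟩)).elim
  · rw [← cutRank_compl]
    exact le_cutRank_of_full_columns h hjB fun i hi => mem_compl.1 hi (hjA i)

/-- for `p, q ≥ 2` and any balanced cut `{A, B}` of the Hsu-grid
`HG_{p,q}` (both sides of size at least `pq/3`), either the cut-rank of `A` is at
least `⌊p/4⌋`, or there is an induced matching of size `⌊q/6⌋` across the cut:
distinct `x_1,…,x_m ∈ A` and `y_1,…,y_m ∈ B` with `m = ⌊q/6⌋` such that `x_i` is
adjacent to `y_j` iff `i = j`. -/
theorem hsuGrid_balanced_cut (p q : ℕ) (hp : 2 ≤ p) (hq : 2 ≤ q)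
    (A : Finset (Fin p × Fin q))
    (hbal₁ : p * q ≤ 3 * A.card) (hbal₂ : 3 * A.card ≤ 2 * (p * q)) :
    p / 4 ≤ cutRank (hsuGrid p q) A ∨
    ∃ x y : Fin (q / 6) → Fin p × Fin q,
      Function.Injective x ∧ Function.Injective y ∧
      (∀ i, x i ∈ A) ∧ (∀ i, y i ∉ A) ∧
      (∀ i j, (hsuGrid p q).Adj (x i) (y j) ↔ i = j) :=
  hsuGrid_balanced_cut_general p q hp A hbal₁ hbal₂
end

section
/- Let G be a finite simple graph, A ⊆ V(G), d ≥ 1 an integer, and X ⊆ A. Then there exists R ⊆ X that is d-neighbor equivalent to X with respect to A (R ≡^d_A X) and such that |R| ≤ d · ρ_G(A) and 2^{|R|} ≤ U_G(A)^d (i.e., |R| ≤ d · β_G(A)). In other words, every d-neighbor equivalence class of subsets of A has a representative of size at most min(d·β_G(A), d·ρ_G(A)). -/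
/-- `d`-neighbor equivalence with respect to `A`: `X ≡^d_A X'` iff every vertex
outside `A` has the same number of neighbors in `X` as in `X'`, counted up to `d`. -/
def dNbEquiv {V : Type*} [Fintype V] [DecidableEq V]
    (G : SimpleGraph V) (A : Finset V) (d : ℕ) (X X' : Finset V) : Prop :=
  ∀ v : V, v ∉ A →
    min (Set.ncard (↑X ∩ G.neighborSet v)) d =
      min (Set.ncard (↑X' ∩ G.neighborSet v)) d


section Aux

open Finset

/-- Extend-injection helper. -/
lemma exists_injOn_of_card_le' {α β : Type*} [DecidableEq α] [DecidableEq β] [Nonempty β]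
    (s : Finset α) (t : Finset β) (h : s.card ≤ t.card) :
    ∃ f : α → β, Set.InjOn f ↑s ∧ ∀ a ∈ s, f a ∈ t := by
  classical
  induction s using Finset.induction generalizing t with
  | empty => exact ⟨fun _ => Classical.arbitrary β, by simp, by simp⟩
  | @insert a s ha ih =>
    have htne : t.Nonempty := by
      rw [← Finset.card_pos]
      have := Finset.card_insert_of_notMem ha
      omega
    obtain ⟨b, hb⟩ := htne
    have hcard : s.card ≤ (t.erase b).card := by
      rw [Finset.card_erase_of_mem hb, Finset.card_insert_of_notMem ha] at *
      omega
    obtain ⟨f, hfinj, hfmem⟩ := ih (t.erase b) hcard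
    refine ⟨Function.update f a b, ?_, ?_⟩
    · intro x hx y hy hxy
      simp only [Finset.coe_insert, Set.mem_insert_iff] at hx hy
      rcases hx with rfl | hx <;> rcases hy with rfl | hy
      · rfl
      · rw [Function.update_self, Function.update_of_ne (by rintro rfl; exact ha hy)] at hxy
        exact absurd (hxy ▸ hfmem y hy) (Finset.notMem_erase b t)
      · rw [Function.update_self, Function.update_of_ne (by rintro rfl; exact ha hx)] at hxy
        exact absurd (hxy ▸ hfmem x hx) (Finset.notMem_erase b t)
      · rw [Function.update_of_ne (by rintro rfl; exact ha hx),
          Function.update_of_ne (by rintro rfl; exact ha hy)] at hxy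
        exact hfinj hx hy hxy
    · intro x hx
      rcases Finset.mem_insert.1 hx with rfl | hx2
      · rw [Function.update_self]; exact hb
      · rw [Function.update_of_ne (by rintro rfl; exact ha hx2)]
        exact Finset.mem_of_mem_erase (hfmem x hx2)

/-- The greedy construction. -/
lemma greedy_core {V : Type*} [Fintype V] [DecidableEq V]
    (G : SimpleGraph V) [DecidableRel G.Adj] (A : Finset V) (d : ℕ) (hd : 1 ≤ d) (R₀ : Finset V)
    (hW : ∀ x ∈ R₀, ∃ v, v ∉ A ∧ G.Adj x v ∧ (R₀ ∩ G.neighborFinset v).card ≤ d) :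
    ∀ R : Finset V, R ⊆ R₀ → ∀ col₀ : V → Fin d,
    ∃ (k : ℕ) (xs ws : Fin k → V) (col : V → Fin d),
      (∀ y, y ∉ R → col y = col₀ y) ∧
      (∀ i, xs i ∈ R) ∧ (∀ i, ws i ∉ A) ∧ (∀ i, G.Adj (xs i) (ws i)) ∧
      (∀ i j, i < j → ¬ G.Adj (xs j) (ws i)) ∧
      R.card ≤ d * k ∧
      (∀ z ∈ R, ∃ v, v ∉ A ∧ G.Adj z v ∧
        ∀ y ∈ R₀, y ≠ z → G.Adj y v → col y ≠ col z) := by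
  classical
  haveI : Nonempty (Fin d) := ⟨⟨0, hd⟩⟩
  intro R
  induction R using Finset.strongInductionOn with
  | _ R ih =>
  intro hRsub col₀
  rcases R.eq_empty_or_nonempty with rfl | ⟨x, hx⟩
  · exact ⟨0, Fin.elim0, Fin.elim0, col₀, fun _ _ => rfl, fun i => i.elim0, fun i => i.elim0,
      fun i => i.elim0, fun i => i.elim0, by simp, by simp⟩
  obtain ⟨v, hvA, hxv, hcnt⟩ := hW x (hRsub hx)
  set C : Finset V := R ∩ G.neighborFinset v with hC
  have hxC : x ∈ C := Finset.mem_inter.2 ⟨hx, (SimpleGraph.mem_neighborFinset G v x).2 hxv.symm⟩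
  have hCR : C ⊆ R := Finset.inter_subset_left
  set R' : Finset V := R \ C with hR'
  have hR'ss : R' ⊂ R := Finset.sdiff_ssubset hCR ⟨x, hxC⟩
  -- color assignment for C
  have hCR₀ : C ⊆ R₀ ∩ G.neighborFinset v :=
    Finset.inter_subset_inter hRsub (Finset.Subset.refl _)
  set D : Finset V := (R₀ ∩ G.neighborFinset v) \ R with hD
  have hDcard : D.card + C.card = (R₀ ∩ G.neighborFinset v).card := by
    have h1 : (R₀ ∩ G.neighborFinset v) ∩ R = C := by
      rw [hC]; ext y
      simp only [Finset.mem_inter]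
      constructor
      · rintro ⟨⟨-, h2⟩, h3⟩; exact ⟨h3, h2⟩
      · rintro ⟨h1, h2⟩; exact ⟨⟨hRsub h1, h2⟩, h1⟩
    have h2 : D = (R₀ ∩ G.neighborFinset v) \ ((R₀ ∩ G.neighborFinset v) ∩ R) := by
      rw [h1, hD]
      ext y
      simp only [Finset.mem_sdiff, Finset.mem_inter, hC]
      tauto
    rw [h2, Finset.card_sdiff_of_subset Finset.inter_subset_left, h1]
    have := Finset.card_le_card (h1 ▸ Finset.inter_subset_left :
      C ⊆ R₀ ∩ G.neighborFinset v)
    omega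
  set F : Finset (Fin d) := D.image col₀ with hF
  have hcards : C.card ≤ (Finset.univ \ F).card := by
    have h1 : F.card ≤ D.card := Finset.card_image_le
    have h2 : (Finset.univ \ F).card = d - F.card := by
      rw [Finset.card_sdiff_of_subset (Finset.subset_univ _), Finset.card_univ, Fintype.card_fin]
    omega
  obtain ⟨g, hg_inj, hg_mem⟩ := exists_injOn_of_card_le' C (Finset.univ \ F) hcards
  set col₀' : V → Fin d := fun y => if y ∈ C then g y else col₀ y with hcol₀'
  obtain ⟨k', xs', ws', col, hcol_out, hxs, hws, hadj, htri, hcard', hpriv⟩ :=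
    ih R' hR'ss (Finset.Subset.trans (Finset.sdiff_subset) hRsub) col₀'
  have hcol_notR' : ∀ y, y ∉ R' → col y = col₀' y := hcol_out
  have hcolC : ∀ y ∈ C, col y = g y := by
    intro y hy
    have : y ∉ R' := by rw [hR']; simp [hy]
    rw [hcol_notR' y this, hcol₀']; simp [hy]
  refine ⟨k' + 1, Fin.cons x xs', Fin.cons v ws', col, ?_, ?_, ?_, ?_, ?_, ?_, ?_⟩
  · intro y hy
    have hy' : y ∉ R' := fun h => hy (Finset.sdiff_subset h)
    have hyC : y ∉ C := fun h => hy (hCR h)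
    rw [hcol_notR' y hy', hcol₀']; simp [hyC]
  · intro i
    refine Fin.cases ?_ ?_ i
    · exact hx
    · intro j; exact Finset.sdiff_subset (hxs j)
  · intro i
    refine Fin.cases hvA hws i
  · intro i
    refine Fin.cases hxv hadj i
  · intro i j hij
    refine Fin.cases ?_ ?_ i (motive := fun i => i < j → ¬ G.Adj ((Fin.cons x xs' : Fin (k'+1) → V) j) ((Fin.cons v ws' : Fin (k'+1) → V) i)) hij
    · -- i = 0
      intro h0j
      refine Fin.cases ?_ ?_ j (motive := fun j => 0 < j → ¬ G.Adj ((Fin.cons x xs' : Fin (k'+1) → V) j) v) h0j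
      · intro h; exact absurd h (lt_irrefl _)
      · intro j' _ hadj'
        have hmem : xs' j' ∈ R' := hxs j'
        rw [hR', Finset.mem_sdiff] at hmem
        exact hmem.2 (Finset.mem_inter.2 ⟨hmem.1,
          (SimpleGraph.mem_neighborFinset G v _).2 hadj'.symm⟩)
    · -- i = succ i'
      intro i' hij'
      refine Fin.cases ?_ ?_ j (motive := fun j => i'.succ < j → ¬ G.Adj ((Fin.cons x xs' : Fin (k'+1) → V) j) ((Fin.cons v ws' : Fin (k'+1) → V) i'.succ)) hij'
      · intro h; exact absurd h (by simp [Fin.lt_def])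
      · intro j' hlt
        simp only [Fin.cons_succ]
        exact htri i' j' (by rwa [Fin.succ_lt_succ_iff] at hlt)
  · have h1 : R'.card + C.card = R.card := by
      rw [hR', Finset.card_sdiff_add_card_eq_card hCR]
    have h2 : C.card ≤ d := le_trans (Finset.card_le_card hCR₀) hcnt
    rw [Nat.mul_succ]
    omega
  · intro z hz
    by_cases hz' : z ∈ R'
    · exact hpriv z hz'
    · have hzC : z ∈ C := by
        rw [hR', Finset.mem_sdiff] at hz'
        tauto
      refine ⟨v, hvA, ?_, ?_⟩
      · have := Finset.mem_inter.1 hzC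
        exact ((SimpleGraph.mem_neighborFinset G v z).1 this.2).symm
      · intro y hyR₀ hyz hyv
        have hyN : y ∈ G.neighborFinset v := (SimpleGraph.mem_neighborFinset G v y).2 hyv.symm
        have hcz : col z = g z := hcolC z hzC
        by_cases hyR : y ∈ R
        · have hyC : y ∈ C := Finset.mem_inter.2 ⟨hyR, hyN⟩
          rw [hcz, hcolC y hyC]
          exact fun h => hyz (hg_inj (by exact_mod_cast hyC) (by exact_mod_cast hzC) h)
        · have hyD : y ∈ D := by
            rw [hD, Finset.mem_sdiff]
            exact ⟨Finset.mem_inter.2 ⟨hyR₀, hyN⟩, hyR⟩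
          have hyR' : y ∉ R' := fun h => hyR (Finset.sdiff_subset h)
          have hyCn : y ∉ C := fun h => hyR (hCR h)
          have hcy : col y = col₀ y := by
            rw [hcol_notR' y hyR', hcol₀']; simp [hyCn]
          intro h
          have h1 : col₀ y ∈ F := Finset.mem_image_of_mem col₀ hyD
          have h2 : g z ∈ Finset.univ \ F := hg_mem z hzC
          rw [Finset.mem_sdiff] at h2
          rw [hcy, hcz] at h
          exact h2.2 (h ▸ h1)


lemma triangular_le_cutRank {V : Type*} [Fintype V] [DecidableEq V]
    (G : SimpleGraph V) (A : Finset V) (k : ℕ) (xs ws : Fin k → V)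
    (hxsA : ∀ i, xs i ∈ A) (hws : ∀ i, ws i ∉ A)
    (hadj : ∀ i, G.Adj (xs i) (ws i)) (htri : ∀ i j, i < j → ¬ G.Adj (xs j) (ws i)) :
    k ≤ cutRank G A := by
  classical
  set x' : Fin k → ↥A := fun i => ⟨xs i, hxsA i⟩ with hx'
  set w' : Fin k → ↥(Aᶜ) := fun i => ⟨ws i, Finset.mem_compl.2 (hws i)⟩ with hw'
  set M := cutMatrix G A with hM
  set P : Matrix (Fin k) ↥A (ZMod 2) := Matrix.of fun i a => if a = x' i then 1 else 0 with hP
  set Q : Matrix ↥(Aᶜ) (Fin k) (ZMod 2) := Matrix.of fun b j => if b = w' j then 1 else 0 with hQ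
  have hN : ∀ i j, (P * (M * Q)) i j = M (x' i) (w' j) := by
    intro i j
    rw [Matrix.mul_apply]
    rw [Finset.sum_eq_single (x' i)]
    · rw [Matrix.mul_apply, Finset.sum_eq_single (w' j)]
      · simp [hP, hQ]
      · intro b _ hb
        simp [hQ, hb]
      · intro h; exact absurd (Finset.mem_univ _) h
    · intro a _ ha
      simp [hP, ha]
    · intro h; exact absurd (Finset.mem_univ _) h
  have hBT : (P * (M * Q)).BlockTriangular id := by
    intro i j hij
    rw [hN]
    have : ¬ G.Adj (xs i) (ws j) := htri j i hij
    simp [hM, cutMatrix, hx', hw', this]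
  have hdet : (P * (M * Q)).det = 1 := by
    rw [Matrix.det_of_upperTriangular hBT]
    apply Finset.prod_eq_one
    intro i _
    rw [hN]
    simp [hM, cutMatrix, hx', hw', hadj i]
  have hunit : IsUnit (P * (M * Q)) :=
    (Matrix.isUnit_iff_isUnit_det _).2 (by rw [hdet]; exact isUnit_one)
  have h1 : (P * (M * Q)).rank = k := by
    rw [Matrix.rank_of_isUnit _ hunit, Fintype.card_fin]
  calc k = (P * (M * Q)).rank := h1.symm
    _ ≤ (M * Q).rank := Matrix.rank_mul_le_right _ _
    _ ≤ M.rank := Matrix.rank_mul_le_left _ _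
    _ = cutRank G A := rfl


lemma pow_le_unionCount {V : Type*} [Fintype V] [DecidableEq V]
    (G : SimpleGraph V) (A : Finset V) (d : ℕ) (hd : 1 ≤ d)
    (R : Finset V) (hRA : R ⊆ A) (col : V → Fin d)
    (hpriv : ∀ z ∈ R, ∃ v, v ∉ A ∧ G.Adj z v ∧
      ∀ y ∈ R, y ≠ z → G.Adj y v → col y ≠ col z) :
    2 ^ R.card ≤ (unionCount G A) ^ d := by
  classical
  set 𝒰 : Set (Set V) :=
    {S : Set V | ∃ Y : Set V, Y ⊆ ↑A ∧ (⋃ y ∈ Y, G.neighborSet y) \ ↑A = S} with h𝒰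
  haveI : Finite ↥𝒰 := (Set.toFinite 𝒰).to_subtype
  have hmem : ∀ (S : Finset V), S ⊆ R → ∀ c : Fin d,
      ((⋃ y ∈ {z : V | z ∈ S ∧ col z = c}, G.neighborSet y) \ ↑A) ∈ 𝒰 := by
    intro S hS c
    exact ⟨{z : V | z ∈ S ∧ col z = c}, fun z hz => by exact_mod_cast hRA (hS hz.1), rfl⟩
  set g : {S // S ∈ R.powerset} → (Fin d → ↥𝒰) := fun S c =>
    ⟨(⋃ y ∈ {z : V | z ∈ S.1 ∧ col z = c}, G.neighborSet y) \ ↑A,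
     hmem S.1 (Finset.mem_powerset.1 S.2) c⟩ with hg
  have key : ∀ (S S' : Finset V), S ⊆ R → S' ⊆ R → ∀ x, x ∈ S → x ∉ S' →
      ((⋃ y ∈ {z : V | z ∈ S ∧ col z = col x}, G.neighborSet y) \ ↑A) ≠
      ((⋃ y ∈ {z : V | z ∈ S' ∧ col z = col x}, G.neighborSet y) \ ↑A) := by
    intro S S' hS hS' x hxS hxS' heq
    obtain ⟨v, hvA, hxv, hp⟩ := hpriv x (hS hxS)
    have hvin : v ∈ (⋃ y ∈ {z : V | z ∈ S ∧ col z = col x}, G.neighborSet y) \ ↑A := by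
      refine ⟨Set.mem_biUnion (show x ∈ {z : V | z ∈ S ∧ col z = col x} from ⟨hxS, rfl⟩) ?_,
        by exact_mod_cast hvA⟩
      exact hxv
    rw [heq] at hvin
    obtain ⟨hv1, hv2⟩ := hvin
    rcases Set.mem_iUnion₂.1 hv1 with ⟨y, ⟨hyS', hyc⟩, hvy⟩
    have hyv : G.Adj y v := hvy
    by_cases hxy : y = x
    · exact hxS' (hxy ▸ hyS')
    · exact hp y (hS' hyS') hxy hyv hyc
  have hginj : Function.Injective g := by
    intro S S' h
    apply Subtype.ext
    by_contra hne
    have hex : ∃ x, (x ∈ S.1 ∧ x ∉ S'.1) ∨ (x ∈ S'.1 ∧ x ∉ S.1) := by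
      by_contra hc
      push_neg at hc
      apply hne
      ext a
      specialize hc a
      tauto
    obtain ⟨x, hcase⟩ := hex
    have happ : ∀ c, (g S c : Set V) = (g S' c : Set V) :=
      fun c => congrArg Subtype.val (congrFun h c)
    rcases hcase with ⟨h1, h2⟩ | ⟨h1, h2⟩
    · exact key S.1 S'.1 (Finset.mem_powerset.1 S.2) (Finset.mem_powerset.1 S'.2) x h1 h2
        (happ (col x))
    · exact key S'.1 S.1 (Finset.mem_powerset.1 S'.2) (Finset.mem_powerset.1 S.2) x h1 h2
        ((happ (col x)).symm)
  have h1 : Nat.card {S // S ∈ R.powerset} = 2 ^ R.card := by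
    rw [Nat.card_eq_fintype_card, Fintype.card_coe, Finset.card_powerset]
  have h2 : Nat.card (Fin d → ↥𝒰) = (unionCount G A) ^ d := by
    rw [Nat.card_fun, Nat.card_coe_set_eq, Nat.card_eq_fintype_card, Fintype.card_fin]
    rfl
  calc 2 ^ R.card = Nat.card {S // S ∈ R.powerset} := h1.symm
    _ ≤ Nat.card (Fin d → ↥𝒰) := Nat.card_le_card_of_injective g hginj
    _ = _ := h2


lemma ncard_inter_nb {V : Type*} [Fintype V] [DecidableEq V]
    (G : SimpleGraph V) [DecidableRel G.Adj] (Y : Finset V) (v : V) :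
    Set.ncard (↑Y ∩ G.neighborSet v) = (Y ∩ G.neighborFinset v).card := by
  have h : (↑(Y ∩ G.neighborFinset v) : Set V) = ↑Y ∩ G.neighborSet v := by
    rw [Finset.coe_inter, SimpleGraph.neighborFinset_def, Set.coe_toFinset]
  rw [← h, Set.ncard_coe_finset]

/-- Existence of a minimum representative together with the witness property. -/
lemma exists_min_rep {V : Type*} [Fintype V] [DecidableEq V]
    (G : SimpleGraph V) [DecidableRel G.Adj] (A : Finset V) (d : ℕ) (hd : 1 ≤ d)
    (X : Finset V) (hX : X ⊆ A) :
    ∃ R : Finset V, R ⊆ X ∧ dNbEquiv G A d R X ∧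
      ∀ x ∈ R, ∃ v, v ∉ A ∧ G.Adj x v ∧ (R ∩ G.neighborFinset v).card ≤ d := by
  classical
  set s : Finset (Finset V) := X.powerset.filter (fun R => dNbEquiv G A d R X) with hs
  have hXs : X ∈ s := by
    rw [hs, Finset.mem_filter, Finset.mem_powerset]
    exact ⟨Finset.Subset.refl X, fun v hv => rfl⟩
  obtain ⟨R, hRs, hmin⟩ := Finset.exists_min_image s Finset.card ⟨X, hXs⟩
  rw [hs, Finset.mem_filter, Finset.mem_powerset] at hRs
  obtain ⟨hRX, hequiv⟩ := hRs
  refine ⟨R, hRX, hequiv, ?_⟩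
  intro x hx
  have h1 : ¬ dNbEquiv G A d (R.erase x) X := by
    intro h
    have hmem : R.erase x ∈ s := by
      rw [hs, Finset.mem_filter, Finset.mem_powerset]
      exact ⟨Finset.Subset.trans (Finset.erase_subset x R) hRX, h⟩
    have := hmin _ hmem
    have hcard := Finset.card_erase_of_mem hx
    have hpos : 1 ≤ R.card := Finset.card_pos.2 ⟨x, hx⟩
    omega
  have h2 : ¬ dNbEquiv G A d (R.erase x) R := by
    intro h
    exact h1 (fun v hv => (h v hv).trans (hequiv v hv))
  simp only [dNbEquiv, not_forall] at h2
  obtain ⟨v, hvA, hne⟩ := h2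
  rw [ncard_inter_nb, ncard_inter_nb] at hne
  have hxNv : x ∈ G.neighborFinset v := by
    by_contra hxN
    apply hne
    rw [Finset.erase_inter, Finset.erase_eq_of_notMem]
    intro hmem
    exact hxN (Finset.mem_inter.1 hmem).2
  have hxmem : x ∈ R ∩ G.neighborFinset v := Finset.mem_inter.2 ⟨hx, hxNv⟩
  have hcount : ((R.erase x) ∩ G.neighborFinset v).card = (R ∩ G.neighborFinset v).card - 1 := by
    rw [Finset.erase_inter, Finset.card_erase_of_mem hxmem]
  refine ⟨v, hvA, ((SimpleGraph.mem_neighborFinset G v x).1 hxNv).symm, ?_⟩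
  by_contra hgt
  push_neg at hgt
  apply hne
  have hp : 1 ≤ (R ∩ G.neighborFinset v).card := Finset.card_pos.2 ⟨x, hxmem⟩
  rw [hcount]
  omega

end Aux

/-- every subset `X ⊆ A` has a `d`-neighbor-equivalent subset `R ⊆ X`
with `|R| ≤ d·ρ_G(A)` and `2^{|R|} ≤ U_G(A)^d` (i.e. `|R| ≤ d·β_G(A)`); thus every
`d`-neighbor equivalence class has a representative of size at most
`min(d·β_G(A), d·ρ_G(A))`. -/
theorem exists_small_representative {V : Type*} [Fintype V] [DecidableEq V]
    (G : SimpleGraph V) (A : Finset V) (d : ℕ) (hd : 1 ≤ d)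
    (X : Finset V) (hX : X ⊆ A) :
    ∃ R : Finset V, R ⊆ X ∧ dNbEquiv G A d R X ∧
      R.card ≤ d * cutRank G A ∧ 2 ^ R.card ≤ (unionCount G A) ^ d := by
  classical
  haveI : DecidableRel G.Adj := Classical.decRel _
  obtain ⟨R, hRX, hequiv, hW⟩ := exists_min_rep G A d hd X hX
  have hRA : R ⊆ A := hRX.trans hX
  obtain ⟨k, xs, ws, col, hcol_out, hxs, hws, hadj, htri, hcard, hpriv⟩ :=
    greedy_core G A d hd R hW R (Finset.Subset.refl R) (fun _ => ⟨0, hd⟩)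
  refine ⟨R, hRX, hequiv, ?_, ?_⟩
  · have hk := triangular_le_cutRank G A k xs ws (fun i => hRA (hxs i)) hws hadj htri
    exact le_trans hcard (Nat.mul_le_mul_left d hk)
  · exact pow_le_unionCount G A d hd R hRA col (fun z hz => hpriv z hz)
end

section
/- Let G be a finite simple graph, A ⊆ V(G), and d ≥ 1 an integer, and write r = ρ_G(A) and U = U_G(A). Then the number of equivalence classes of the d-neighbor equivalence relation ≡^d_A on subsets of A is at most 2^{d·r² + r}, and also at most U^{d·log₂U + 1} (the paper's Lemma states these bounds as 2^{d·ρ_G(A)²} and 2^{d·β_G(A)²}). -/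
/-- The number of equivalence classes of the `d`-neighbor equivalence relation
`≡^d_A` on the subsets of `A`. -/
noncomputable def numDNbClasses {V : Type*} [Fintype V] [DecidableEq V]
    (G : SimpleGraph V) (A : Finset V) (d : ℕ) : ℕ :=
  Set.ncard {C : Set (Finset V) |
    ∃ X : Finset V, X ⊆ A ∧ C = {X' : Finset V | X' ⊆ A ∧ dNbEquiv G A d X X'}}

open Finset

theorem Finset.exists_subset_forall_erase_ne {α β : Type*} [DecidableEq α]
    (f : Finset α → β) (X : Finset α) :
    ∃ Y ⊆ X, f Y = f X ∧ ∀ y ∈ Y, f (Y.erase y) ≠ f Y := by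
  obtain ⟨Y, ⟨hYX, hfY⟩, hmin⟩ := Set.exists_min_image {Y | Y ⊆ X ∧ f Y = f X} card
    (X.powerset.finite_toSet.subset fun Y hY => mem_powerset.2 hY.1) ⟨X, subset_rfl, rfl⟩
  refine ⟨Y, hYX, hfY, fun y hy hfy => ?_⟩
  have := hmin (Y.erase y) ⟨(erase_subset y Y).trans hYX, hfy.trans hfY⟩
  exact (card_erase_lt_of_mem hy).not_ge this

theorem Finset.exists_subcover_forall_exists_private {α β : Type*} [DecidableEq β]
    (R : β → α → Prop) (X : Finset α) (W : Finset β) (hW : ∀ x ∈ X, ∃ w ∈ W, R w x) :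
    ∃ C ⊆ W, (∀ x ∈ X, ∃ c ∈ C, R c x) ∧
      ∀ c ∈ C, ∃ x ∈ X, R c x ∧ ∀ c' ∈ C, R c' x → c' = c := by
  obtain ⟨C, ⟨hCW, hcover⟩, hmin⟩ :=
    Set.exists_min_image {C | C ⊆ W ∧ ∀ x ∈ X, ∃ c ∈ C, R c x} card
      (W.powerset.finite_toSet.subset fun C hC => mem_powerset.2 hC.1) ⟨W, subset_rfl, hW⟩
  refine ⟨C, hCW, hcover, fun c hc => ?_⟩
  by_contra! hnone
  have hcover' : ∀ x ∈ X, ∃ c' ∈ C.erase c, R c' x := by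
    intro x hx
    obtain ⟨c₀, hc₀, hRx⟩ := hcover x hx
    by_cases h : c₀ = c
    · obtain ⟨c', hc', hR', hne⟩ := hnone x hx (h ▸ hRx)
      exact ⟨c', mem_erase.2 ⟨hne, hc'⟩, hR'⟩
    · exact ⟨c₀, mem_erase.2 ⟨h, hc₀⟩, hRx⟩
  have := hmin (C.erase c) ⟨(erase_subset c C).trans hCW, hcover'⟩
  exact (card_erase_lt_of_mem hc).not_ge this

theorem Multiset.exists_fin_map_eq {β : Type*} (m : Multiset β) :
    ∃ l : Fin (card m) → β, Finset.univ.val.map l = m := by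
  induction m using Quotient.inductionOn with
  | h L => exact ⟨fun i => L[i], by rw [Fin.univ_val_map]; exact congrArg _ (List.ofFn_getElem)⟩

theorem Set.ncard_image_le_card_pow_of_multiset {α β γ : Type*} (R : Finset β) (k : ℕ)
    (S : Set α) (g : α → γ) (Ψ : Multiset β → γ)
    (h : ∀ a ∈ S, ∃ m : Multiset β, Multiset.card m = k ∧ (∀ b ∈ m, b ∈ R) ∧ Ψ m = g a) :
    (g '' S).ncard ≤ R.card ^ k := by
  classical
  set T := Fintype.piFinset fun _ : Fin k => R
  have hsub : g '' S ⊆ T.image fun l => Ψ (Finset.univ.val.map l) := by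
    rintro _ ⟨a, ha, rfl⟩
    obtain ⟨m, hk, hmR, hΨ⟩ := h a ha
    subst hk
    obtain ⟨l, hl⟩ := m.exists_fin_map_eq
    refine Finset.mem_image.2 ⟨l, Fintype.mem_piFinset.2 fun i => hmR _ ?_, hl.symm ▸ hΨ⟩
    exact hl ▸ Multiset.mem_map_of_mem _ (mem_univ_val i)
  calc (g '' S).ncard ≤ (T.image fun l => Ψ (Finset.univ.val.map l)).card :=
        (Set.ncard_le_ncard hsub (finite_toSet _)).trans_eq (Set.ncard_coe_finset _)
    _ ≤ T.card := card_image_le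
    _ = R.card ^ k := by simp [T]

theorem SimpleGraph.ncard_coe_inter_neighborSet {V : Type*} (G : SimpleGraph V)
    [DecidableRel G.Adj] (X : Finset V) (v : V) :
    (↑X ∩ G.neighborSet v).ncard = #{x ∈ X | G.Adj v x} := by
  rw [← Set.ncard_coe_finset]
  congr 1
  ext
  simp

section

open Classical

variable {V : Type*} (G : SimpleGraph V) (A : Finset V) (d : ℕ)

noncomputable def nbSignature (X : Finset V) (v : {v // v ∉ A}) : ℕ :=
  min (↑X ∩ G.neighborSet v).ncard d

noncomputable def cutNeighborhoods : Finset (Set V) :=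
  insert ∅ (A.image fun x => G.neighborSet x \ ↑A)

theorem mem_cutNeighborhoods {S : Set V} :
    S ∈ cutNeighborhoods G A ↔ S = ∅ ∨ ∃ x ∈ A, G.neighborSet x \ ↑A = S := by
  simp [cutNeighborhoods]

variable {G A d} in
theorem exists_adj_card_le_of_nbSignature_erase_ne [DecidableEq V] {X : Finset V} {x : V}
    (hx : x ∈ X) (h : nbSignature G A d (X.erase x) ≠ nbSignature G A d X) :
    ∃ v, v ∉ A ∧ G.Adj v x ∧ #{y ∈ X | G.Adj v y} ≤ d := by
  obtain ⟨⟨v, hvA⟩, hv⟩ := Function.ne_iff.1 h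
  simp only [nbSignature, SimpleGraph.ncard_coe_inter_neighborSet, filter_erase] at hv
  have hadj : G.Adj v x := by
    by_contra hadj
    exact hv (by rw [erase_eq_of_notMem (by simp [hadj])])
  refine ⟨v, hvA, hadj, ?_⟩
  rw [card_erase_of_mem (mem_filter.2 ⟨hx, hadj⟩)] at hv
  eta_reduce at hv ⊢
  omega

theorem exists_multiset_cutNeighborhoods {X : Finset V} (hXA : X ⊆ A) {k : ℕ}
    (hk : X.card ≤ k) :
    ∃ m : Multiset (Set V), Multiset.card m = k ∧ (∀ S ∈ m, S ∈ cutNeighborhoods G A) ∧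
      (fun v : {v // v ∉ A} => min (m.countP (↑v ∈ ·)) d) = nbSignature G A d X := by
  refine ⟨X.val.map (fun x => G.neighborSet x \ ↑A) + Multiset.replicate (k - X.card) ∅,
    by simp; omega, fun S hS => ?_, funext fun v => ?_⟩
  · simp only [Multiset.mem_add, Multiset.mem_map, mem_val, Multiset.mem_replicate] at hS
    rcases hS with ⟨x, hx, rfl⟩ | ⟨-, rfl⟩
    exacts [(mem_cutNeighborhoods G A).2 (.inr ⟨x, hXA hx, rfl⟩),
      (mem_cutNeighborhoods G A).2 (.inl rfl)]
  · have hpad : (Multiset.replicate (k - X.card) (∅ : Set V)).countP (↑v ∈ ·) = 0 :=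
      Multiset.countP_eq_zero.2 fun S hS => by simp [Multiset.eq_of_mem_replicate hS]
    simp [nbSignature, SimpleGraph.ncard_coe_inter_neighborSet, Multiset.countP_map, hpad, v.2,
      G.adj_comm]
    rfl

variable [Fintype V] [DecidableEq V]

theorem dNbEquiv_iff_nbSignature_eq (X X' : Finset V) :
    dNbEquiv G A d X X' ↔ nbSignature G A d X = nbSignature G A d X' := by
  simp [dNbEquiv, nbSignature, funext_iff]

theorem numDNbClasses_le_ncard_image_nbSignature :
    numDNbClasses G A d ≤ (nbSignature G A d '' {X | X ⊆ A}).ncard := by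
  have hclasses : {C : Set (Finset V) |
      ∃ X : Finset V, X ⊆ A ∧ C = {X' : Finset V | X' ⊆ A ∧ dNbEquiv G A d X X'}} =
      (fun σ => {X' | X' ⊆ A ∧ σ = nbSignature G A d X'}) ''
        (nbSignature G A d '' {X | X ⊆ A}) := by
    ext C
    simp [dNbEquiv_iff_nbSignature_eq, eq_comm]
  rw [numDNbClasses, hclasses]
  exact Set.ncard_image_le (Set.toFinite _)

theorem card_le_cutRank_of_forall_exists_private {C : Finset V} (hCA : C ⊆ Aᶜ)
    (hpriv : ∀ c ∈ C, ∃ x ∈ A, G.Adj c x ∧ ∀ c' ∈ C, G.Adj c' x → c' = c) :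
    C.card ≤ cutRank G A := by
  choose p hpA hadj hp using hpriv
  have hid : (cutMatrix G A).submatrix (fun c : C => ⟨p c c.2, hpA c c.2⟩)
      (fun c : C => ⟨c, hCA c.2⟩) = 1 := by
    ext c c'
    have : G.Adj (p c c.2) c' ↔ c = c' :=
      ⟨fun h => Subtype.ext (hp c c.2 c' c'.2 h.symm).symm, fun h => h ▸ (hadj c c.2).symm⟩
    simp [cutMatrix, Matrix.one_apply, this]
  calc C.card = (1 : Matrix C C (ZMod 2)).rank := by simp [Matrix.rank_one]
    _ ≤ cutRank G A := hid ▸ Matrix.rank_submatrix_le _ _ _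

theorem two_pow_card_le_unionCount_of_forall_exists_private {C : Finset V} (hCA : C ⊆ Aᶜ)
    (hpriv : ∀ c ∈ C, ∃ x ∈ A, G.Adj c x ∧ ∀ c' ∈ C, G.Adj c' x → c' = c) :
    2 ^ C.card ≤ unionCount G A := by
  let Y : Finset V → Set V := fun S =>
    {x | x ∈ A ∧ ∃ c ∈ S, G.Adj c x ∧ ∀ c' ∈ C, G.Adj c' x → c' = c}
  let nb : Finset V → Set V := fun S => (⋃ y ∈ Y S, G.neighborSet y) \ ↑A
  have hrecover : ∀ S ⊆ C, ↑C ∩ nb S = ↑S := by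
    intro S hS
    ext c
    simp only [nb, Y, Set.mem_inter_iff, Set.mem_sdiff, Set.mem_iUnion, Set.mem_ofPred_eq,
      SimpleGraph.mem_neighborSet, mem_coe, exists_prop]
    constructor
    · rintro ⟨hc, ⟨y, ⟨-, c₀, hc₀, -, hy⟩, hyc⟩, -⟩
      exact hy c hc hyc.symm ▸ hc₀
    · intro hc
      obtain ⟨x, hxA, hcx, hx⟩ := hpriv c (hS hc)
      exact ⟨hS hc, ⟨x, ⟨hxA, c, hc, hcx, hx⟩, hcx.symm⟩, mem_compl.1 (hCA (hS hc))⟩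
  rw [unionCount, ← card_powerset, ← Set.ncard_coe_finset]
  refine Set.ncard_le_ncard_of_injOn nb (fun S _ => ⟨Y S, fun y hy => hy.1, rfl⟩)
    (fun S hS S' hS' h => ?_) (Set.toFinite _)
  rw [← coe_inj, ← hrecover S (mem_powerset.1 hS), ← hrecover S' (mem_powerset.1 hS')]
  exact congrArg _ h

theorem card_cutNeighborhoods_le_unionCount :
    (cutNeighborhoods G A).card ≤ unionCount G A := by
  rw [unionCount, ← Set.ncard_coe_finset]
  refine Set.ncard_le_ncard ?_ (Set.toFinite _)
  intro S hS
  rcases (mem_cutNeighborhoods G A).1 hS with rfl | ⟨x, hx, rfl⟩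
  · exact ⟨∅, Set.empty_subset _, by simp⟩
  · exact ⟨{x}, by simpa using hx, by simp⟩

theorem card_cutNeighborhoods_le_two_pow_cutRank :
    (cutNeighborhoods G A).card ≤ 2 ^ cutRank G A := by
  let ind : Set V → (↥(Aᶜ) → ZMod 2) := fun S v => if ↑v ∈ S then 1 else 0
  let W := Submodule.span (ZMod 2) (Set.range (cutMatrix G A).row)
  have hmaps : ∀ S ∈ (cutNeighborhoods G A : Set (Set V)), ind S ∈ (W : Set _) := by
    intro S hS
    rcases (mem_cutNeighborhoods G A).1 hS with rfl | ⟨x, hx, rfl⟩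
    · rw [show ind ∅ = 0 from funext fun v => by simp [ind]]
      exact W.zero_mem
    · refine Submodule.subset_span ⟨⟨x, hx⟩, funext fun v => ?_⟩
      simp [ind, cutMatrix, Matrix.row, mem_compl.1 v.2]
  have hdisj : ∀ S ∈ (cutNeighborhoods G A : Set (Set V)), ∀ v ∈ S, v ∉ A := by
    intro S hS v hv
    rcases (mem_cutNeighborhoods G A).1 hS with rfl | ⟨x, -, rfl⟩
    exacts [hv.elim, hv.2]
  have hinj : Set.InjOn ind (cutNeighborhoods G A : Set (Set V)) := by
    intro S hS S' hS' h
    ext v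
    by_cases hv : v ∈ A
    · exact iff_of_false (fun h => hdisj S hS v h hv) (fun h => hdisj S' hS' v h hv)
    · have := congrFun h ⟨v, mem_compl.2 hv⟩
      simp only [ind] at this
      split_ifs at this <;> simp_all
  calc (cutNeighborhoods G A).card = (cutNeighborhoods G A : Set (Set V)).ncard :=
        (Set.ncard_coe_finset _).symm
    _ ≤ (W : Set (↥(Aᶜ) → ZMod 2)).ncard :=
        Set.ncard_le_ncard_of_injOn ind hmaps hinj (Set.toFinite _)
    _ = 2 ^ cutRank G A := by
        rw [← Nat.card_coe_set_eq, SetLike.coe_sort_coe,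
          Module.natCard_eq_pow_finrank (K := ZMod 2), Nat.card_zmod, cutRank,
          Matrix.rank_eq_finrank_span_row]

theorem card_le_of_forall_nbSignature_erase_ne {X : Finset V} (hXA : X ⊆ A)
    (hX : ∀ x ∈ X, nbSignature G A d (X.erase x) ≠ nbSignature G A d X) :
    X.card ≤ d * min (cutRank G A) (Nat.log 2 (unionCount G A)) := by
  let W : Finset V := {v | v ∉ A ∧ #{y ∈ X | G.Adj v y} ≤ d}
  have hW : ∀ x ∈ X, ∃ v ∈ W, G.Adj v x := fun x hx =>
    let ⟨v, hvA, hadj, hvd⟩ := exists_adj_card_le_of_nbSignature_erase_ne hx (hX x hx)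
    ⟨v, mem_filter.2 ⟨mem_univ v, hvA, hvd⟩, hadj⟩
  obtain ⟨C, hCW, hcover, hpriv⟩ := exists_subcover_forall_exists_private G.Adj X W hW
  have hCA : C ⊆ Aᶜ := fun c hc => mem_compl.2 (mem_filter.1 (hCW hc)).2.1
  have hprivA : ∀ c ∈ C, ∃ x ∈ A, G.Adj c x ∧ ∀ c' ∈ C, G.Adj c' x → c' = c :=
    fun c hc => let ⟨x, hx, h⟩ := hpriv c hc; ⟨x, hXA hx, h⟩
  have hXC : X.card ≤ d * C.card := calc
    X.card ≤ (C.biUnion fun c => {y ∈ X | G.Adj c y}).card := card_le_card fun x hx =>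
        let ⟨c, hc, hadj⟩ := hcover x hx; mem_biUnion.2 ⟨c, hc, mem_filter.2 ⟨hx, hadj⟩⟩
    _ ≤ C.card * d := card_biUnion_le_card_mul _ _ _ fun c hc => (mem_filter.1 (hCW hc)).2.2
    _ = d * C.card := mul_comm _ _
  have hCr := card_le_cutRank_of_forall_exists_private G A hCA hprivA
  have hCU := Nat.le_log_of_pow_le one_lt_two
    (two_pow_card_le_unionCount_of_forall_exists_private G A hCA hprivA)
  exact hXC.trans (Nat.mul_le_mul_left d (le_min hCr hCU))

theorem numDNbClasses_le_card_cutNeighborhoods_pow :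
    numDNbClasses G A d ≤
      (cutNeighborhoods G A).card ^ (d * min (cutRank G A) (Nat.log 2 (unionCount G A))) := by
  set k := d * min (cutRank G A) (Nat.log 2 (unionCount G A))
  have hsmall : nbSignature G A d '' {X | X ⊆ A} =
      nbSignature G A d '' {X | X ⊆ A ∧ X.card ≤ k} := by
    refine subset_antisymm ?_ (Set.image_mono fun X hX => hX.1)
    rintro _ ⟨X, hXA, rfl⟩
    obtain ⟨Y, hYX, hY, hYirr⟩ := X.exists_subset_forall_erase_ne (nbSignature G A d)
    exact ⟨Y, ⟨hYX.trans hXA,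
      card_le_of_forall_nbSignature_erase_ne G A d (hYX.trans hXA) hYirr⟩, hY⟩
  calc numDNbClasses G A d ≤ (nbSignature G A d '' {X | X ⊆ A}).ncard :=
        numDNbClasses_le_ncard_image_nbSignature G A d
    _ ≤ _ := hsmall ▸ Set.ncard_image_le_card_pow_of_multiset _ k _ _ _
        fun X hX => exists_multiset_cutNeighborhoods G A d hX.1 hX.2

end

theorem numDNbClasses_le_general {V : Type*} [Fintype V] [DecidableEq V]
    (G : SimpleGraph V) (A : Finset V) (d : ℕ)
    (r U : ℕ) (hr : r = cutRank G A) (hU : U = unionCount G A) :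
    numDNbClasses G A d ≤ 2 ^ (d * r ^ 2 + r) ∧
      (numDNbClasses G A d : ℝ) ≤
        (U : ℝ) ^ ((d : ℝ) * Real.logb 2 (U : ℝ) + 1) := by
  have hN : numDNbClasses G A d ≤ (cutNeighborhoods G A).card ^ (d * min r (Nat.log 2 U)) :=
    hr ▸ hU ▸ numDNbClasses_le_card_cutNeighborhoods_pow G A d
  have hR2 : (cutNeighborhoods G A).card ≤ 2 ^ r :=
    hr ▸ card_cutNeighborhoods_le_two_pow_cutRank G A
  have hRU : (cutNeighborhoods G A).card ≤ U := hU ▸ card_cutNeighborhoods_le_unionCount G A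
  have hU1 : 1 ≤ U := (card_pos.2 ⟨∅, mem_insert_self _ _⟩).trans_le hRU
  constructor
  · calc numDNbClasses G A d ≤ (2 ^ r) ^ (d * min r (Nat.log 2 U)) :=
          hN.trans (Nat.pow_le_pow_left hR2 _)
      _ = 2 ^ (r * (d * min r (Nat.log 2 U))) := (pow_mul _ _ _).symm
      _ ≤ 2 ^ (d * r ^ 2 + r) := Nat.pow_le_pow_right two_pos <| calc
          r * (d * min r (Nat.log 2 U)) ≤ r * (d * r) := by gcongr; exact min_le_left _ _
          _ ≤ d * r ^ 2 + r := by nlinarith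
  · have hNU : numDNbClasses G A d ≤ U ^ (d * Nat.log 2 U) :=
      hN.trans ((Nat.pow_le_pow_left hRU _).trans
        (Nat.pow_le_pow_right hU1 (Nat.mul_le_mul_left d (min_le_right _ _))))
    have hlog : (Nat.log 2 U : ℝ) ≤ Real.logb 2 U := by exact_mod_cast Real.natLog_le_logb U 2
    calc (numDNbClasses G A d : ℝ) ≤ (U : ℝ) ^ ((d * Nat.log 2 U : ℕ) : ℝ) := by
          rw [Real.rpow_natCast]
          exact_mod_cast hNU
      _ ≤ _ := Real.rpow_le_rpow_of_exponent_le (by exact_mod_cast hU1) (by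
          push_cast
          nlinarith [mul_le_mul_of_nonneg_left hlog d.cast_nonneg])

/-- with `r = ρ_G(A)` and `U = U_G(A)`, the number of `d`-neighbor
equivalence classes on the subsets of `A` is at most `2^(d·r² + r)` and at most
`U^(d·log₂ U + 1)`. -/
theorem numDNbClasses_le {V : Type*} [Fintype V] [DecidableEq V]
    (G : SimpleGraph V) (A : Finset V) (d : ℕ) (hd : 1 ≤ d)
    (r U : ℕ) (hr : r = cutRank G A) (hU : U = unionCount G A) :
    numDNbClasses G A d ≤ 2 ^ (d * r ^ 2 + r) ∧
      (numDNbClasses G A d : ℝ) ≤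
        (U : ℝ) ^ ((d : ℝ) * Real.logb 2 (U : ℝ) + 1) :=
  numDNbClasses_le_general G A d r U hr hU
end

section
/- Let p ≥ 2, q ≥ 2, and 0 ≤ c ≤ q, and in the Hsu-grid HG_{p,q} let A = {v_{i,j} : 1 ≤ i ≤ p, 1 ≤ j ≤ c} be the set of vertices in the first c columns. Then the union-count of this column-prefix cut satisfies U(A) ≤ p + 1: every set N(Y)∖A with Y ⊆ A is of the form {v_{i',c+1} : i' ≥ l} for some l, so there are at most p+1 distinct such sets. (This underlies the bound βw(HG_{p,q}) ≤ 2 log p via vertical decomposition trees.) -/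
/-! Outside the first `c` columns only column `c` has neighbours inside them, and `v_{i,c-1}`
sees exactly the vertices `v_{i',c}` with `i' ≥ i`. So every `N(Y) ∖ A` is column `c`
restricted to an upper set of rows. Upper sets of a linear order form a chain, hence in a
finite one they are determined by their cardinality, which leaves at most `p + 1` of them. -/

theorem Set.ncard_setOf_isUpperSet_le {α : Type*} [LinearOrder α] [Finite α] :
    {s : Set α | IsUpperSet s}.ncard ≤ Nat.card α + 1 := by
  calc {s : Set α | IsUpperSet s}.ncard
      ≤ (↑(Finset.range (Nat.card α + 1)) : Set ℕ).ncard := by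
        refine Set.ncard_le_ncard_of_injOn Set.ncard (fun s _ => ?_) ?_ (Finset.finite_toSet _)
        · simpa [Nat.lt_succ_iff] using Set.ncard_le_card s
        · intro s hs t ht hst
          rcases hs.total ht with hst' | hts
          · exact Set.eq_of_subset_of_ncard_le hst' hst.ge
          · exact (Set.eq_of_subset_of_ncard_le hts hst.le).symm
    _ = Nat.card α + 1 := by simp

def hsuGridColumnPrefix (p q c : ℕ) : Finset (Fin p × Fin q) :=
  Finset.univ.filter fun x => (x.2 : ℕ) < c

theorem hsuGrid_iUnion_neighborSet_diff_columnPrefix {p q c : ℕ} {Y : Set (Fin p × Fin q)}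
    (hY : Y ⊆ hsuGridColumnPrefix p q c) :
    (⋃ y ∈ Y, (hsuGrid p q).neighborSet y) \ hsuGridColumnPrefix p q c =
      {z | (z.2 : ℕ) = c ∧ z.1 ∈ upperClosure (Prod.fst '' {y ∈ Y | (y.2 : ℕ) + 1 = c})} := by
  have mem_prefix (x : Fin p × Fin q) :
      x ∈ (hsuGridColumnPrefix p q c : Set _) ↔ (x.2 : ℕ) < c := by
    simp [hsuGridColumnPrefix]
  ext z
  simp only [Set.mem_sdiff, Set.mem_iUnion, SimpleGraph.mem_neighborSet, mem_prefix,
    Set.mem_ofPred_eq, mem_upperClosure, Set.mem_image, exists_exists_and_eq_and]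
  constructor
  · rintro ⟨⟨y, hyY, hadj⟩, hz⟩
    have hy := (mem_prefix y).1 (hY hyY)
    rcases hadj with ⟨hcol, -⟩ | ⟨hcol, hrow⟩ | ⟨hcol, -⟩
    · rw [hcol] at hy; omega
    · exact ⟨by omega, y, ⟨hyY, by omega⟩, hrow⟩
    · omega
  · rintro ⟨hz, y, ⟨hyY, hcol⟩, hrow⟩
    exact ⟨⟨y, hyY, Or.inr (Or.inl ⟨by omega, hrow⟩)⟩, by omega⟩

theorem hsuGrid_column_prefix_unionCount_general (p q c : ℕ) :
    unionCount (hsuGrid p q)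
        (Finset.univ.filter (fun x : Fin p × Fin q => (x.2 : ℕ) < c)) ≤ p + 1 := by
  let column (R : Set (Fin p)) : Set (Fin p × Fin q) := {z | (z.2 : ℕ) = c ∧ z.1 ∈ R}
  have h_sub : {S : Set (Fin p × Fin q) | ∃ Y : Set (Fin p × Fin q),
      Y ⊆ hsuGridColumnPrefix p q c ∧
        (⋃ y ∈ Y, (hsuGrid p q).neighborSet y) \ hsuGridColumnPrefix p q c = S} ⊆
      column '' {R | IsUpperSet R} := by
    rintro S ⟨Y, hY, rfl⟩
    exact ⟨_, (upperClosure _).upper, (hsuGrid_iUnion_neighborSet_diff_columnPrefix hY).symm⟩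
  calc _ ≤ (column '' {R | IsUpperSet R}).ncard := Set.ncard_le_ncard h_sub (Set.toFinite _)
    _ ≤ {R : Set (Fin p) | IsUpperSet R}.ncard := Set.ncard_image_le (Set.toFinite _)
    _ ≤ p + 1 := by simpa using Set.ncard_setOf_isUpperSet_le (α := Fin p)

/-- in the Hsu-grid `HG_{p,q}`, the cut given by the first `c` columns
(vertices `v_{i,j}` with `j < c`, 0-indexed) has union-count at most `p + 1`: every
set `N(Y) ∖ A` with `Y ⊆ A` is a final segment of column `c`, so there are at most
`p + 1` distinct such sets. -/
theorem hsuGrid_column_prefix_unionCount (p q c : ℕ) (hp : 2 ≤ p) (hq : 2 ≤ q)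
    (hc : c ≤ q) :
    unionCount (hsuGrid p q)
        (Finset.univ.filter (fun x : Fin p × Fin q => (x.2 : ℕ) < c)) ≤ p + 1 :=
  hsuGrid_column_prefix_unionCount_general p q c
end

section
/- Let p ≥ 2, q ≥ 2, and 0 ≤ r ≤ p, and in the Hsu-grid HG_{p,q} let A = {v_{i,j} : 1 ≤ i ≤ r, 1 ≤ j ≤ q} be the set of vertices in the first r rows. Then the cut-rank of this row-prefix cut satisfies ρ(A) ≤ 2q. (This underlies the bound that any horizontal decomposition tree of HG_{p,q} has rank-width at most 2q, hence rw(HG_{p,q}) ≤ 2q.) -/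
/-
A vertex `v_{i,j}` above the cut (`i < r`) sees, below the cut, the whole column `j + 1`
(every Hsu edge to it goes downwards) and, only when `i = r - 1`, the vertex `v_{r,j}`.
So each row of the cut matrix is determined by the pair `(j, [i = r - 1])`, and the cut
matrix has at most `2q` distinct rows.
-/

theorem Matrix.rank_le_card_of_row_eq_comp {m n ι R : Type*} [Fintype n] [Fintype ι]
    [CommRing R] [StrongRankCondition R] (M : Matrix m n R) (f : ι → n → R) (g : m → ι)
    (h : ∀ i, M i = f (g i)) : M.rank ≤ Fintype.card ι := by
  have hM : M = (Matrix.of f).submatrix g id := funext h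
  rw [hM]
  exact (Matrix.rank_submatrix_le _ g id).trans (Matrix.of f).rank_le_card_height

theorem hsuGrid_adj_iff_of_lt_of_le {p q r : ℕ} {x y : Fin p × Fin q}
    (hx : (x.1 : ℕ) < r) (hy : r ≤ (y.1 : ℕ)) :
    (hsuGrid p q).Adj x y ↔
      (y.2 : ℕ) = x.2 + 1 ∨ ((x.1 : ℕ) + 1 = r ∧ y.2 = x.2 ∧ (y.1 : ℕ) = r) := by
  simp only [hsuGrid, Fin.ext_iff]
  omega

theorem hsuGrid_row_prefix_cutRank_general (p q r : ℕ) :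
    cutRank (hsuGrid p q)
        (Finset.univ.filter (fun x : Fin p × Fin q => (x.1 : ℕ) < r)) ≤ 2 * q := by
  set A := Finset.univ.filter (fun x : Fin p × Fin q => (x.1 : ℕ) < r)
  let rowType (x : A) : Fin q × Bool := (x.1.2, decide ((x.1.1 : ℕ) + 1 = r))
  let row (t : Fin q × Bool) (y : ↥(Aᶜ)) : ZMod 2 :=
    if (y.1.2 : ℕ) = t.1 + 1 ∨ (t.2 ∧ y.1.2 = t.1 ∧ (y.1.1 : ℕ) = r) then 1 else 0
  have hrow : ∀ x, cutMatrix (hsuGrid p q) A x = row (rowType x) := by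
    intro x
    funext y
    have hx : (x.1.1 : ℕ) < r := (Finset.mem_filter.mp x.2).2
    have hy : r ≤ (y.1.1 : ℕ) := by simpa [A] using y.2
    simp only [cutMatrix, Matrix.of_apply, row, rowType, hsuGrid_adj_iff_of_lt_of_le hx hy,
      decide_eq_true_eq]
  calc cutRank (hsuGrid p q) A ≤ Fintype.card (Fin q × Bool) :=
        Matrix.rank_le_card_of_row_eq_comp _ row rowType hrow
    _ = 2 * q := by simp [Fintype.card_prod, mul_comm]

/-- in the Hsu-grid `HG_{p,q}`, the cut given by the first `r` rows
(vertices `v_{i,j}` with `i < r`, 0-indexed) has cut-rank at most `2q`. -/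
theorem hsuGrid_row_prefix_cutRank (p q r : ℕ) (hp : 2 ≤ p) (hq : 2 ≤ q)
    (hr : r ≤ p) :
    cutRank (hsuGrid p q)
        (Finset.univ.filter (fun x : Fin p × Fin q => (x.1 : ℕ) < r)) ≤ 2 * q :=
  hsuGrid_row_prefix_cutRank_general p q r
end

section
/- Let k be a sufficiently large integer and let {A, B} be a balanced cut of the k × k grid graph (both |A| and |B| at least k²/3). Then there is an induced matching of size ⌊k/6⌋ across the cut: distinct vertices x_1,…,x_m ∈ A and y_1,…,y_m ∈ B with m = ⌊k/6⌋ such that x_i is adjacent to y_j in the grid if and only if i = j. Consequently the cut-rank satisfies ρ(A) ≥ ⌊k/6⌋ and the union-count satisfies U(A) ≥ 2^{⌊k/6⌋}, which yields the paper's claim that the boolean-width of the k × k grid is at least k/6. -/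
/-- The `k × k` grid graph: vertex set `Fin k × Fin k`, with `(i,j)` adjacent to
`(i',j')` iff `|i − i'| + |j − j'| = 1`. -/
def gridGraph (k : ℕ) : SimpleGraph (Fin k × Fin k) where
  Adj x y := Nat.dist (x.1 : ℕ) (y.1 : ℕ) + Nat.dist (x.2 : ℕ) (y.2 : ℕ) = 1
  symm := by
    refine ⟨?_⟩
    intro x y h
    simpa [Nat.dist_comm] using h
  loopless := by
    refine ⟨?_⟩
    intro x h
    simp [Nat.dist_self] at h

/-!
A row of the grid meeting both `A` and its complement contains a grid edge across the cut.
If fewer than `k/3` rows are mixed, balance forces one row inside `A` and one outside it, and then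
every column is mixed. Every other mixed line gives `⌊k/6⌋` crossing edges lying in lines pairwise
at distance at least two; as grid edges only join lines at distance at most one, these edges form an
induced matching across the cut. An induced matching of size `m` puts an `m × m` identity submatrix
into the cut matrix, and its `2^m` sets of left endpoints have distinct neighbourhoods outside `A`.
-/

open Finset Function

lemma Finset.exists_pairwise_two_le_dist (R : Finset ℕ) {m : ℕ} (hm : 2 * m ≤ R.card) :
    ∃ r : Fin m → ℕ, (∀ i, r i ∈ R) ∧ Pairwise fun i j => 2 ≤ Nat.dist (r i) (r j) := by
  let e := R.orderEmbOfFin rfl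
  have hlt : ∀ {a b : ℕ} (ha : a < R.card) (hb : b < R.card), a < b → e ⟨a, ha⟩ < e ⟨b, hb⟩ :=
    fun _ _ hab => e.strictMono hab
  have gap : ∀ i j : Fin m, i < j → e ⟨2 * i, by omega⟩ + 2 ≤ e ⟨2 * j, by omega⟩ := fun i j h =>
    have := hlt (a := 2 * i) (b := 2 * i + 1) (by omega) (by omega) (by omega)
    have := hlt (a := 2 * i + 1) (b := 2 * j) (by omega) (by omega) (by omega)
    by omega
  refine ⟨fun i => e ⟨2 * i, by omega⟩, fun i => R.orderEmbOfFin_mem rfl _, fun i j hij => ?_⟩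
  simp only [Nat.dist]
  rcases hij.lt_or_gt with h | h
  · have := gap i j h; omega
  · have := gap j i h; omega

namespace SimpleGraph

variable {V : Type*}

lemma Preconnected.exists_adj_mem_notMem {G : SimpleGraph V} (hG : G.Preconnected) {S : Set V}
    {u v : V} (hu : u ∈ S) (hv : v ∉ S) : ∃ s t, G.Adj s t ∧ s ∈ S ∧ t ∉ S := by
  obtain ⟨d, -, hd⟩ := (hG u v).some.exists_boundary_dart S hu hv
  exact ⟨d.fst, d.snd, d.adj, hd⟩

structure IsCrossInducedMatching (G : SimpleGraph V) (A : Finset V) {m : ℕ} (x y : Fin m → V) :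
    Prop where
  mem_left : ∀ i, x i ∈ A
  notMem_right : ∀ i, y i ∉ A
  adj_iff : ∀ i j, G.Adj (x i) (y j) ↔ i = j

namespace IsCrossInducedMatching

variable {G : SimpleGraph V} {A : Finset V} {m : ℕ} {x y : Fin m → V}

lemma injective_left (h : G.IsCrossInducedMatching A x y) : Injective x := fun i j hij =>
  (h.adj_iff i j).1 (hij ▸ (h.adj_iff j j).2 rfl)

lemma injective_right (h : G.IsCrossInducedMatching A x y) : Injective y := fun i j hij =>
  ((h.adj_iff j i).1 (hij ▸ (h.adj_iff j j).2 rfl)).symm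

variable [Fintype V] [DecidableEq V]

lemma le_cutRank (h : G.IsCrossInducedMatching A x y) : m ≤ cutRank G A := by
  have hid : (cutMatrix G A).submatrix (fun i => ⟨x i, h.mem_left i⟩)
      (fun j => ⟨y j, mem_compl.2 (h.notMem_right j)⟩) = 1 := by
    ext i j
    simp [cutMatrix, Matrix.one_apply, h.adj_iff]
  calc m = (1 : Matrix (Fin m) (Fin m) (ZMod 2)).rank := by simp
    _ ≤ cutRank G A := hid ▸ Matrix.rank_submatrix_le _ _ _

lemma two_pow_le_unionCount (h : G.IsCrossInducedMatching A x y) :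
    2 ^ m ≤ unionCount G A := by
  set F : Set (Fin m) → Set V := fun s => (⋃ v ∈ x '' s, G.neighborSet v) \ ↑A
  have hF : ∀ s i, y i ∈ F s ↔ i ∈ s := fun s i => by
    simp [F, h.adj_iff, h.notMem_right]
  have hinj : Injective F := fun s t hst => Set.ext fun i => by rw [← hF, hst, hF]
  have hrange : Set.range F ⊆ {S | ∃ Y : Set V, Y ⊆ ↑A ∧ (⋃ y ∈ Y, G.neighborSet y) \ ↑A = S} := by
    rintro _ ⟨s, rfl⟩
    exact ⟨x '' s, by rintro _ ⟨i, -, rfl⟩; exact h.mem_left i, rfl⟩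
  calc 2 ^ m = (Set.range F).ncard := by
        rw [← Nat.card_coe_set_eq, Nat.card_range_of_injective hinj, Nat.card_eq_fintype_card,
          Fintype.card_set, Fintype.card_fin]
    _ ≤ unionCount G A := Set.ncard_le_ncard hrange (Set.toFinite _)

end IsCrossInducedMatching

lemma exists_isCrossInducedMatching_of_lines (G : SimpleGraph V) (A : Finset V) (line : V → ℕ)
    (hline : ∀ a b, G.Adj a b → Nat.dist (line a) (line b) ≤ 1) (R : Finset ℕ) {m : ℕ}
    (hm : 2 * m ≤ R.card)
    (hR : ∀ r ∈ R, ∃ p q, G.Adj p q ∧ p ∈ A ∧ q ∉ A ∧ line p = r ∧ line q = r) :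
    ∃ x y : Fin m → V, G.IsCrossInducedMatching A x y := by
  obtain ⟨r, hrR, hr⟩ := R.exists_pairwise_two_le_dist hm
  choose x y hadj hx hy hlx hly using fun i => hR (r i) (hrR i)
  refine ⟨x, y, hx, hy, fun i j => ⟨fun hij => ?_, fun hij => hij ▸ hadj i⟩⟩
  by_contra hne
  have := hline _ _ hij
  rw [hlx, hly] at this
  exact absurd (hr hne) (by omega)

end SimpleGraph

section MixedRows

variable {α β : Type*} [Fintype α] [Fintype β]

open Classical in
noncomputable def mixedRows (S : Finset (α × β)) : Finset α :=
  univ.filter fun a => (∃ b, (a, b) ∈ S) ∧ ∃ b, (a, b) ∉ S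

lemma mem_mixedRows {S : Finset (α × β)} {a : α} :
    a ∈ mixedRows S ↔ (∃ b, (a, b) ∈ S) ∧ ∃ b, (a, b) ∉ S := by
  simp [mixedRows]

lemma mixedRows_compl [DecidableEq α] [DecidableEq β] (S : Finset (α × β)) :
    mixedRows Sᶜ = mixedRows S := by
  ext a
  simp [mem_mixedRows, and_comm]

lemma card_le_card_mixedRows_mul {S : Finset (α × β)} (h : ∀ a, ∃ b, (a, b) ∉ S) :
    S.card ≤ (mixedRows S).card * Fintype.card β := by
  have hsub : S ⊆ mixedRows S ×ˢ univ := fun p hp =>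
    mem_product.2 ⟨mem_mixedRows.2 ⟨⟨p.2, hp⟩, h p.1⟩, mem_univ _⟩
  simpa using card_le_card hsub

end MixedRows

section Grid

open SimpleGraph

variable {k : ℕ}

lemma gridGraph_dist_fst_le_one {a b : Fin k × Fin k} (h : (gridGraph k).Adj a b) :
    Nat.dist a.1 b.1 ≤ 1 := by
  have : _ + _ = 1 := h
  omega

lemma gridGraph_dist_snd_le_one {a b : Fin k × Fin k} (h : (gridGraph k).Adj a b) :
    Nat.dist a.2 b.2 ≤ 1 := by
  have : _ + _ = 1 := h
  omega

lemma gridGraph_exists_adj_in_row (A : Finset (Fin k × Fin k)) (r : Fin k) {j₀ j₁ : Fin k}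
    (h₀ : (r, j₀) ∈ A) (h₁ : (r, j₁) ∉ A) :
    ∃ p q, (gridGraph k).Adj p q ∧ p ∈ A ∧ q ∉ A ∧ p.1 = r ∧ q.1 = r := by
  obtain ⟨s, t, hst, hs, ht⟩ :=
    (pathGraph_preconnected k).exists_adj_mem_notMem (S := {j | (r, j) ∈ A}) h₀ h₁
  refine ⟨(r, s), (r, t), ?_, hs, ht, rfl, rfl⟩
  rw [pathGraph_adj] at hst
  simp only [gridGraph, Nat.dist]
  omega

lemma gridGraph_exists_adj_in_column (A : Finset (Fin k × Fin k)) (c : Fin k) {i₀ i₁ : Fin k}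
    (h₀ : (i₀, c) ∈ A) (h₁ : (i₁, c) ∉ A) :
    ∃ p q, (gridGraph k).Adj p q ∧ p ∈ A ∧ q ∉ A ∧ p.2 = c ∧ q.2 = c := by
  obtain ⟨s, t, hst, hs, ht⟩ :=
    (pathGraph_preconnected k).exists_adj_mem_notMem (S := {i | (i, c) ∈ A}) h₀ h₁
  refine ⟨(s, c), (t, c), ?_, hs, ht, rfl, rfl⟩
  rw [pathGraph_adj] at hst
  simp only [gridGraph, Nat.dist]
  omega

lemma le_three_mul_card_mixedRows (hk : 0 < k) {S : Finset (Fin k × Fin k)}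
    (hS : k * k ≤ 3 * S.card) (h : ∀ i, ∃ j, (i, j) ∉ S) : k ≤ 3 * (mixedRows S).card := by
  have := card_le_card_mixedRows_mul h
  rw [Fintype.card_fin] at this
  nlinarith

lemma gridGraph_exists_isCrossInducedMatching (hk : 0 < k) (A : Finset (Fin k × Fin k))
    (hA : k * k ≤ 3 * A.card) (hB : 3 * A.card ≤ 2 * (k * k)) :
    ∃ x y : Fin (k / 6) → Fin k × Fin k, (gridGraph k).IsCrossInducedMatching A x y := by
  by_cases hrows : (∃ r, ∀ j, (r, j) ∈ A) ∧ ∃ r, ∀ j, (r, j) ∉ A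
  · obtain ⟨⟨ra, hra⟩, rb, hrb⟩ := hrows
    refine exists_isCrossInducedMatching_of_lines _ A (fun p => p.2)
      (fun _ _ => gridGraph_dist_snd_le_one) (range k) (by rw [card_range]; omega) fun c hc => ?_
    obtain ⟨p, q, hpq, hp, hq, hpc, hqc⟩ :=
      gridGraph_exists_adj_in_column A ⟨c, mem_range.1 hc⟩ (hra _) (hrb _)
    exact ⟨p, q, hpq, hp, hq, by simp [hpc], by simp [hqc]⟩
  · have hmixed : k ≤ 3 * (mixedRows A).card := by
      rcases not_and_or.1 hrows with hfull | hempty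
      · exact le_three_mul_card_mixedRows hk hA (by simpa using hfull)
      · rw [← mixedRows_compl]
        refine le_three_mul_card_mixedRows hk ?_ (by simpa using hempty)
        rw [card_compl, Fintype.card_prod, Fintype.card_fin]
        omega
    refine exists_isCrossInducedMatching_of_lines _ A (fun p => p.1)
      (fun _ _ => gridGraph_dist_fst_le_one) ((mixedRows A).map Fin.valEmbedding)
      (by rw [card_map]; omega) fun _ hmem => ?_
    obtain ⟨r, hr, rfl⟩ := mem_map.1 hmem
    obtain ⟨⟨j₀, h₀⟩, j₁, h₁⟩ := mem_mixedRows.1 hr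
    obtain ⟨p, q, hpq, hp, hq, hpr, hqr⟩ := gridGraph_exists_adj_in_row A r h₀ h₁
    exact ⟨p, q, hpq, hp, hq, by simp [hpr], by simp [hqr]⟩

end Grid

/-- for all sufficiently large `k`, every balanced cut `{A, B}` of the
`k × k` grid (both sides of size at least `k²/3`) admits an induced matching of size
`⌊k/6⌋` across the cut, and consequently `ρ(A) ≥ ⌊k/6⌋` and `U(A) ≥ 2^⌊k/6⌋`
(so the boolean-width of the `k × k` grid is at least `k/6`). -/
theorem grid_balanced_cut_induced_matching :
    ∃ k₀ : ℕ, ∀ k : ℕ, k₀ ≤ k → ∀ A : Finset (Fin k × Fin k),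
      k * k ≤ 3 * A.card → 3 * A.card ≤ 2 * (k * k) →
      (∃ x y : Fin (k / 6) → Fin k × Fin k,
        Function.Injective x ∧ Function.Injective y ∧
        (∀ i, x i ∈ A) ∧ (∀ i, y i ∉ A) ∧
        (∀ i j, (gridGraph k).Adj (x i) (y j) ↔ i = j)) ∧
      k / 6 ≤ cutRank (gridGraph k) A ∧
      2 ^ (k / 6) ≤ unionCount (gridGraph k) A := by
  refine ⟨1, fun k hk A hA hB => ?_⟩
  obtain ⟨x, y, h⟩ := gridGraph_exists_isCrossInducedMatching hk A hA hB
  exact ⟨⟨x, y, h.injective_left, h.injective_right, h.mem_left, h.notMem_right, h.adj_iff⟩,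
    h.le_cutRank, h.two_pow_le_unionCount⟩
end

section
/- Let G be a finite simple graph and A ⊆ V(G), and let t = |{N(x)∖A : x ∈ A}| be the number of distinct external neighborhoods of vertices of A (equivalently, the number of parts of the maximum external module partition of A). Then t ≤ U_G(A) ≤ 2^t; in particular β_G(A) ≤ t and t ≤ 2^{β_G(A)}. (This is the per-cut content of the inequalities log cw(G) − 1 ≤ βw(G) ≤ cw(G) relating boolean-width and clique-width.) -/
/-- with `t` the number of distinct external neighborhoods `N(x) ∖ A`
of vertices `x ∈ A` (the number of parts of the maximum external module partition of
`A`), we have `t ≤ U_G(A) ≤ 2^t`; in particular `β_G(A) ≤ t` and `t ≤ 2^{β_G(A)}`. -/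
theorem externalNbhds_le_unionCount_le {V : Type*} [Fintype V] [DecidableEq V]
    (G : SimpleGraph V) (A : Finset V) (t : ℕ)
    (ht : t = Set.ncard {S : Set V | ∃ x ∈ A, G.neighborSet x \ ↑A = S}) :
    t ≤ unionCount G A ∧ unionCount G A ≤ 2 ^ t := by
  classical
  set F : Set (Set V) := {S : Set V | ∃ x ∈ A, G.neighborSet x \ ↑A = S} with hF
  set U : Set (Set V) :=
    {S : Set V | ∃ Y : Set V, Y ⊆ ↑A ∧ (⋃ y ∈ Y, G.neighborSet y) \ ↑A = S} with hU
  have hFU : F ⊆ U := by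
    rintro S ⟨x, hx, rfl⟩
    exact ⟨{x}, by simpa using hx, by simp⟩
  have hdec : ∀ T ∈ U, T = ⋃₀ {f ∈ F | f ⊆ T} := by
    rintro T ⟨Y, hY, rfl⟩
    ext v
    constructor
    · rintro ⟨hv, hvA⟩
      simp only [Set.mem_iUnion] at hv
      obtain ⟨y, hy, hvy⟩ := hv
      refine Set.mem_sUnion.2 ⟨G.neighborSet y \ ↑A, ⟨⟨y, hY hy, rfl⟩, ?_⟩, ⟨hvy, hvA⟩⟩
      rintro w ⟨hw, hwA⟩
      exact ⟨Set.mem_iUnion.2 ⟨y, Set.mem_iUnion.2 ⟨hy, hw⟩⟩, hwA⟩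
    · rintro ⟨f, ⟨hf, hfT⟩, hvf⟩
      exact hfT hvf
  constructor
  · rw [ht]
    exact Set.ncard_le_ncard hFU (Set.toFinite U)
  · haveI : Finite ↥F := F.toFinite.to_subtype
    haveI : Fintype ↥F := Fintype.ofFinite _
    have hinj : Set.InjOn (fun T : Set V => {f : ↥F | (f : Set V) ⊆ T}) U := by
      intro T1 h1 T2 h2 h
      have e1 := hdec T1 h1
      have e2 := hdec T2 h2
      have : {f ∈ F | f ⊆ T1} = {f ∈ F | f ⊆ T2} := by
        ext S
        constructor
        · rintro ⟨hS, hsub⟩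
          exact ⟨hS, Set.ext_iff.1 h ⟨S, hS⟩ |>.1 hsub⟩
        · rintro ⟨hS, hsub⟩
          exact ⟨hS, Set.ext_iff.1 h ⟨S, hS⟩ |>.2 hsub⟩
      rw [e1, e2, this]
    have hle : U.ncard ≤ (Set.univ : Set (Set ↥F)).ncard := by
      exact Set.ncard_le_ncard_of_injOn _ (fun a _ => Set.mem_univ _) hinj (Set.toFinite _)
    have hcard : (Set.univ : Set (Set ↥F)).ncard = 2 ^ t := by
      rw [Set.ncard_univ, Nat.card_eq_fintype_card, Fintype.card_set, ht]
      congr 1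
      rw [Set.ncard_eq_toFinset_card' F, Set.toFinset_card]
    calc unionCount G A = U.ncard := rfl
      _ ≤ _ := hle
      _ = 2 ^ t := hcard
end
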